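/- arXiv:2411.03913 — 9 statements merged into one kernel-verified Lean document; each statement's English description precedes it below -/
import Mathlib

section
/- Let n ≥ 2 be an integer, let Δ_0 < Δ_1 < … < Δ_n be real numbers, and let r_0, r_1, …, r_n be positive real numbers satisfying the kissing-horocycle relations e^{Δ_i} − e^{Δ_{i−1}} = 2·√(r_{i−1}·r_i) for every i = 1, …, n. Define s_i := √(r_i/r_{i−1}) + √(r_i/r_{i+1}) for i = 1, …, n−1. Then ∏_{i=1}^{n−1} s_i = 2·√(r_1·r_{n−1}) · ∏_{i=1}^{n−1} (e^{Δ_{i+1}} − e^{Δ_{i−1}}) / ∏_{i=1}^{n} (e^{Δ_i} − e^{Δ_{i−1}}). -/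
/-- Product formula for the horocycle segment lengths `s_i` in terms of the
perimeter coordinates `Δ_i`, given the kissing-horocycle relations. -/
theorem stmt_0 (n : ℕ) (hn : 2 ≤ n) (Δ r s : ℕ → ℝ)
    (hΔ : ∀ i, i < n → Δ i < Δ (i + 1))
    (hr : ∀ i, i ≤ n → 0 < r i)
    (hkiss : ∀ i, 1 ≤ i → i ≤ n →
      Real.exp (Δ i) - Real.exp (Δ (i - 1)) = 2 * Real.sqrt (r (i - 1) * r i))
    (hs : ∀ i, 1 ≤ i → i ≤ n - 1 →
      s i = Real.sqrt (r i / r (i - 1)) + Real.sqrt (r i / r (i + 1))) :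
    ∏ i ∈ Finset.Icc 1 (n - 1), s i =
      2 * Real.sqrt (r 1 * r (n - 1)) *
        (∏ i ∈ Finset.Icc 1 (n - 1), (Real.exp (Δ (i + 1)) - Real.exp (Δ (i - 1)))) /
        ∏ i ∈ Finset.Icc 1 n, (Real.exp (Δ i) - Real.exp (Δ (i - 1))) := by
  have ht : ∀ i, i ≤ n → 0 < Real.sqrt (r i) := fun i hi => Real.sqrt_pos.mpr (hr i hi)
  -- exp differences in terms of square roots
  have hD : ∀ i, i + 1 ≤ n →
      Real.exp (Δ (i + 1)) - Real.exp (Δ i) = 2 * (Real.sqrt (r i) * Real.sqrt (r (i + 1))) := by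
    intro i h
    have h0 : Real.exp (Δ (i + 1)) - Real.exp (Δ i) = 2 * Real.sqrt (r i * r (i + 1)) :=
      hkiss (i + 1) (by omega) h
    rw [h0, Real.sqrt_mul (hr i (by omega)).le]
  have hN : ∀ i, i + 2 ≤ n →
      Real.exp (Δ (i + 2)) - Real.exp (Δ i) =
        2 * (Real.sqrt (r i) * Real.sqrt (r (i + 1))) +
          2 * (Real.sqrt (r (i + 1)) * Real.sqrt (r (i + 2))) := by
    intro i h
    have h1 := hD i (by omega)
    have h2 : Real.exp (Δ (i + 2)) - Real.exp (Δ (i + 1)) =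
        2 * (Real.sqrt (r (i + 1)) * Real.sqrt (r (i + 2))) := hD (i + 1) (by omega)
    linarith
  have hs' : ∀ i, i + 2 ≤ n →
      s (i + 1) = Real.sqrt (r (i + 1)) / Real.sqrt (r i) +
        Real.sqrt (r (i + 1)) / Real.sqrt (r (i + 2)) := by
    intro i h
    have h0 : s (i + 1) = Real.sqrt (r (i + 1) / r i) + Real.sqrt (r (i + 1) / r (i + 2)) :=
      hs (i + 1) (by omega) (by omega)
    rw [h0, Real.sqrt_div (hr (i + 1) (by omega)).le, Real.sqrt_div (hr (i + 1) (by omega)).le]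
  -- key identity, multiplied through by the denominator
  have key : ∀ m, 2 ≤ m → m ≤ n →
      (∏ i ∈ Finset.Icc 1 (m - 1), s i) *
        ∏ i ∈ Finset.Icc 1 m, (Real.exp (Δ i) - Real.exp (Δ (i - 1))) =
      2 * (Real.sqrt (r 1) * Real.sqrt (r (m - 1))) *
        ∏ i ∈ Finset.Icc 1 (m - 1), (Real.exp (Δ (i + 1)) - Real.exp (Δ (i - 1))) := by
    intro m hm
    induction m, hm using Nat.le_induction with
    | base =>
      intro h2n
      have e1 : Finset.Icc 1 (2 - 1) = {1} := rfl
      have e2 : Finset.Icc 1 2 = {1, 2} := rfl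
      rw [e1, e2, Finset.prod_singleton, Finset.prod_singleton,
        Finset.prod_pair (by norm_num : (1 : ℕ) ≠ 2)]
      have hD1 : Real.exp (Δ 1) - Real.exp (Δ (1 - 1)) =
          2 * (Real.sqrt (r 0) * Real.sqrt (r 1)) := hD 0 (by omega)
      have hD2 : Real.exp (Δ 2) - Real.exp (Δ (2 - 1)) =
          2 * (Real.sqrt (r 1) * Real.sqrt (r 2)) := hD 1 (by omega)
      have hN1 : Real.exp (Δ (1 + 1)) - Real.exp (Δ (1 - 1)) =
          2 * (Real.sqrt (r 0) * Real.sqrt (r 1)) +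
            2 * (Real.sqrt (r 1) * Real.sqrt (r 2)) := hN 0 (by omega)
      have hs1 : s 1 = Real.sqrt (r 1) / Real.sqrt (r 0) +
          Real.sqrt (r 1) / Real.sqrt (r 2) := hs' 0 (by omega)
      have h0 := (ht 0 (by omega)).ne'
      have h2 := (ht 2 (by omega)).ne'
      rw [hD1, hD2, hN1, hs1]
      have e3 : r (2 - 1) = r 1 := rfl
      rw [e3]
      field_simp
      ring
    | succ m hm ih =>
      intro hm1
      obtain ⟨k, rfl⟩ : ∃ k, m = k + 2 := ⟨m - 2, by omega⟩
      have ihk : (∏ i ∈ Finset.Icc 1 (k + 1), s i) *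
            ∏ i ∈ Finset.Icc 1 (k + 2), (Real.exp (Δ i) - Real.exp (Δ (i - 1))) =
          2 * (Real.sqrt (r 1) * Real.sqrt (r (k + 1))) *
            ∏ i ∈ Finset.Icc 1 (k + 1), (Real.exp (Δ (i + 1)) - Real.exp (Δ (i - 1))) :=
        ih (by omega)
      have e1 : k + 2 + 1 - 1 = k + 2 := rfl
      have e2 : Finset.Icc 1 (k + 2) = Finset.Icc 1 (k + 1 + 1) := rfl
      rw [e1, e2,
        Finset.prod_Icc_succ_top (by omega : 1 ≤ k + 1 + 1) s,
        Finset.prod_Icc_succ_top (by omega : 1 ≤ k + 2 + 1)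
          (fun i => Real.exp (Δ i) - Real.exp (Δ (i - 1))),
        Finset.prod_Icc_succ_top (by omega : 1 ≤ k + 1 + 1)
          (fun i => Real.exp (Δ (i + 1)) - Real.exp (Δ (i - 1)))]
      rw [← e2] at *
      have hsk : s (k + 1 + 1) = Real.sqrt (r (k + 2)) / Real.sqrt (r (k + 1)) +
          Real.sqrt (r (k + 2)) / Real.sqrt (r (k + 3)) := hs' (k + 1) (by omega)
      have hDk : Real.exp (Δ (k + 2 + 1)) - Real.exp (Δ (k + 2 + 1 - 1)) =
          2 * (Real.sqrt (r (k + 2)) * Real.sqrt (r (k + 3))) := hD (k + 2) (by omega)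
      have hNk : Real.exp (Δ (k + 1 + 1 + 1)) - Real.exp (Δ (k + 1 + 1 - 1)) =
          2 * (Real.sqrt (r (k + 1)) * Real.sqrt (r (k + 2))) +
            2 * (Real.sqrt (r (k + 2)) * Real.sqrt (r (k + 3))) := hN (k + 1) (by omega)
      rw [hsk, hDk, hNk]
      have h1 := (ht (k + 1) (by omega)).ne'
      have h3 := (ht (k + 3) (by omega)).ne'
      have scalar : 2 * (Real.sqrt (r 1) * Real.sqrt (r (k + 1))) *
            ((Real.sqrt (r (k + 2)) / Real.sqrt (r (k + 1)) +
              Real.sqrt (r (k + 2)) / Real.sqrt (r (k + 3))) *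
              (2 * (Real.sqrt (r (k + 2)) * Real.sqrt (r (k + 3))))) =
          2 * (Real.sqrt (r 1) * Real.sqrt (r (k + 2))) *
            (2 * (Real.sqrt (r (k + 1)) * Real.sqrt (r (k + 2))) +
              2 * (Real.sqrt (r (k + 2)) * Real.sqrt (r (k + 3)))) := by
        field_simp
        ring
      linear_combination
        ((Real.sqrt (r (k + 2)) / Real.sqrt (r (k + 1)) +
            Real.sqrt (r (k + 2)) / Real.sqrt (r (k + 3))) *
          (2 * (Real.sqrt (r (k + 2)) * Real.sqrt (r (k + 3))))) * ihk +
        (∏ i ∈ Finset.Icc 1 (k + 1), (Real.exp (Δ (i + 1)) - Real.exp (Δ (i - 1)))) * scalar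
  -- positivity of the denominator
  have hDpos : ∀ i ∈ Finset.Icc 1 n, 0 < Real.exp (Δ i) - Real.exp (Δ (i - 1)) := by
    intro i hi
    rw [Finset.mem_Icc] at hi
    rw [hkiss i hi.1 hi.2]
    have : 0 < Real.sqrt (r (i - 1) * r i) :=
      Real.sqrt_pos.mpr (mul_pos (hr (i - 1) (by omega)) (hr i hi.2))
    linarith
  have hp : 0 < ∏ i ∈ Finset.Icc 1 n, (Real.exp (Δ i) - Real.exp (Δ (i - 1))) :=
    Finset.prod_pos hDpos
  rw [eq_div_iff hp.ne', Real.sqrt_mul (hr 1 (by omega)).le]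
  exact key n hn le_rfl
end

section
/- Let m ≥ 2 be an even integer and let x_1, …, x_m be real numbers. Let A be the m×m skew-symmetric matrix with entries A_{ij} = x_i·(x_j − x_i) for i < j, A_{ji} = −A_{ij}, and A_{ii} = 0. Then det A = (x_1 · ∏_{i=2}^{m} (x_i − x_{i−1}))². -/
/-!
Write `c₁ = x₁` and `cᵢ = xᵢ - xᵢ₋₁`, and let `E` be the lower unitriangular matrix with `-1` on
the subdiagonal (so `det E = 1`). Conjugating by `E` takes second mixed differences of the
entries, and `x_i (x_j - x_i)` has mixed difference `c_i c_j sign(j - i)`; hence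
`E A Eᵀ = D S D` with `D = diag c` and `S` the sign matrix. Conjugating `S` by `E` once more gives
the skew adjacency matrix of a path, whose determinant is `1` for an even number of vertices
(expand along the first row and column). So `det A = (∏ cᵢ)²`.
-/

open Matrix Finset

namespace GoldmanBracket

variable {R : Type*} [CommRing R]

def skewExtend (f : ℕ → ℕ → R) (a b : ℕ) : R :=
  if a < b then f a b else if b < a then -f b a else 0

def mixedDiff (g : ℕ → ℕ → R) (i j : ℕ) : R :=
  g (i + 1) (j + 1) - g i (j + 1) - g (i + 1) j + g i j

lemma skewExtend_zero_left {f : ℕ → ℕ → R} (hf : ∀ b, f 0 b = 0) (b : ℕ) :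
    skewExtend f 0 b = 0 := by
  simp [skewExtend, hf]

lemma skewExtend_zero_right {f : ℕ → ℕ → R} (hf : ∀ b, f 0 b = 0) (a : ℕ) :
    skewExtend f a 0 = 0 := by
  simp [skewExtend, hf]

variable (R) in
def diffMatrix (m : ℕ) : Matrix (Fin m) (Fin m) R :=
  of fun i k => if k = i then 1 else if (k : ℕ) + 1 = i then -1 else 0

variable (R) in
def signMatrix (m : ℕ) : Matrix (Fin m) (Fin m) R :=
  of fun i j => skewExtend (fun _ _ => 1) i j

variable (R) in
def pathSkewMatrix (m : ℕ) : Matrix (Fin m) (Fin m) R :=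
  of fun i j => if (i : ℕ) + 1 = j then 1 else if (j : ℕ) + 1 = i then -1 else 0

lemma det_diffMatrix (m : ℕ) : (diffMatrix R m).det = 1 := by
  rw [det_of_isLowerTriangular]
  · simp [diffMatrix]
  · intro i k (hik : (i : ℕ) < k)
    simp only [diffMatrix, of_apply]
    rw [if_neg (by omega), if_neg (by omega)]

lemma diffMatrix_mul_apply {n : Type*} {m : ℕ} (h : ℕ → n → R) (h0 : ∀ j, h 0 j = 0)
    (M : Matrix (Fin m) n R) (hM : ∀ i j, M i j = h (i + 1) j) (i : Fin m) (j : n) :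
    (diffMatrix R m * M) i j = h (i + 1) j - h i j := by
  have hsplit : ∀ k : Fin m, diffMatrix R m i k * M k j =
      (if k = i then h (i + 1) j else 0) - (if (k : ℕ) + 1 = i then h (k + 1) j else 0) := by
    intro k
    simp only [diffMatrix, of_apply, hM]
    by_cases hki : k = i
    · subst hki; simp
    · split_ifs <;> simp
  have hprev : ∑ k : Fin m, (if (k : ℕ) + 1 = i then h (k + 1) j else 0) = h i j := by
    rw [Fin.sum_univ_eq_sum_range (fun k => if k + 1 = (i : ℕ) then h (k + 1) j else 0)]
    obtain ⟨i, hi⟩ := i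
    cases i with
    | zero => simp [h0]
    | succ p => simp [sum_ite_eq', show p < m by omega]
  rw [mul_apply, sum_congr rfl (fun k _ => hsplit k), sum_sub_distrib,
    sum_ite_eq', hprev, if_pos (mem_univ _)]

/-- Indexing `M` by `g (i + 1) (j + 1)` with `g` vanishing at index `0` lets the first row of `E`,
which has no `-1`, obey the same formula as the others. -/
lemma diffMatrix_mul_mul_transpose {m : ℕ} (g : ℕ → ℕ → R) (hg_left : ∀ b, g 0 b = 0)
    (hg_right : ∀ a, g a 0 = 0) (M : Matrix (Fin m) (Fin m) R)
    (hM : ∀ i j, M i j = g (i + 1) (j + 1)) :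
    diffMatrix R m * M * (diffMatrix R m)ᵀ = of fun i j : Fin m => mixedDiff g i j := by
  have hrows : ∀ i j, (diffMatrix R m * M) i j = g (i + 1) (j + 1) - g i (j + 1) :=
    diffMatrix_mul_apply (fun a (j : Fin m) => g a (j + 1)) (fun j => hg_left _) M hM
  have htranspose : diffMatrix R m * M * (diffMatrix R m)ᵀ
      = (diffMatrix R m * (diffMatrix R m * M)ᵀ)ᵀ := by
    rw [transpose_mul, transpose_transpose]
  ext i j
  rw [htranspose, transpose_apply, diffMatrix_mul_apply (fun b (i : Fin m) => g (i + 1) b - g i b)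
    (fun i => by simp [hg_right]) (diffMatrix R m * M)ᵀ (fun j i => hrows i j)]
  simp only [mixedDiff, of_apply]
  ring

lemma mixedDiff_skewExtend_mul_sub (y : ℕ → R) (i j : ℕ) :
    mixedDiff (skewExtend fun a b => y a * (y b - y a)) i j
      = (y (i + 1) - y i) * skewExtend (fun _ _ => 1) i j * (y (j + 1) - y j) := by
  obtain h | rfl | rfl | rfl | h : i + 1 < j ∨ i + 1 = j ∨ i = j ∨ j + 1 = i ∨ j + 1 < i := by
    omega
  all_goals
    simp (disch := omega) only [mixedDiff, skewExtend, if_pos, if_neg]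
    ring

lemma mixedDiff_skewExtend_indicator (i j : ℕ) :
    mixedDiff (skewExtend fun a _ => if a = 0 then (0 : R) else 1) i j
      = if i + 1 = j then 1 else if j + 1 = i then -1 else 0 := by
  obtain h | rfl | rfl | rfl | h : i + 1 < j ∨ i + 1 = j ∨ i = j ∨ j + 1 = i ∨ j + 1 < i := by
    omega
  all_goals
    simp (disch := omega) only [mixedDiff, skewExtend, if_pos, if_neg]
    split_ifs <;> ring

lemma det_eq_neg_mul_det_submatrix_succ_succ {n : ℕ} (M : Matrix (Fin (n + 2)) (Fin (n + 2)) R)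
    (hrow : ∀ j, j ≠ 1 → M 0 j = 0) (hcol : ∀ i, i ≠ 1 → M i 0 = 0) :
    M.det = -(M 0 1 * M 1 0) *
      (M.submatrix (fun i : Fin n => i.succ.succ) (fun j : Fin n => j.succ.succ)).det := by
  have hcorner : Fin.succAbove (1 : Fin (n + 2)) 0 = 0 := rfl
  rw [det_succ_row_zero, Fintype.sum_eq_single 1 (fun j hj => by rw [hrow j hj]; ring),
    det_succ_column_zero, Fintype.sum_eq_single 0]
  · simp [submatrix_submatrix, hcorner, Function.comp_def, Fin.one_succAbove_succ]
    ring
  · intro i hi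
    have hi' : i.succ ≠ 1 := fun h => hi (Fin.succ_injective _ h)
    simp [hcorner, hcol _ hi']

lemma det_pathSkewMatrix_add_two (n : ℕ) :
    (pathSkewMatrix R (n + 2)).det = (pathSkewMatrix R n).det := by
  have hne : ∀ j : Fin (n + 2), j ≠ 1 → (j : ℕ) ≠ 1 := fun j hj h => hj (Fin.ext h)
  rw [det_eq_neg_mul_det_submatrix_succ_succ]
  · have hminor : (pathSkewMatrix R (n + 2)).submatrix (fun i : Fin n => i.succ.succ)
        (fun j : Fin n => j.succ.succ) = pathSkewMatrix R n := by
      ext i j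
      simp [pathSkewMatrix]
    rw [hminor]
    simp [pathSkewMatrix]
  · intro j hj
    simp [pathSkewMatrix, Ne.symm (hne j hj)]
  · intro i hi
    simp [pathSkewMatrix, Ne.symm (hne i hi)]

lemma det_pathSkewMatrix_of_even {m : ℕ} (hm : Even m) : (pathSkewMatrix R m).det = 1 := by
  obtain ⟨k, rfl⟩ := hm
  induction k with
  | zero => exact det_fin_zero
  | succ k ih => rw [show k + 1 + (k + 1) = k + k + 2 by ring, det_pathSkewMatrix_add_two, ih]

lemma diffMatrix_mul_signMatrix_mul_transpose (m : ℕ) :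
    diffMatrix R m * signMatrix R m * (diffMatrix R m)ᵀ = pathSkewMatrix R m := by
  have hf : ∀ b, (fun a (_ : ℕ) => if a = 0 then (0 : R) else 1) 0 b = 0 := fun _ => rfl
  rw [diffMatrix_mul_mul_transpose (skewExtend fun a _ => if a = 0 then (0 : R) else 1)
    (skewExtend_zero_left hf) (skewExtend_zero_right hf) (signMatrix R m)]
  · ext i j
    simp [mixedDiff_skewExtend_indicator, pathSkewMatrix]
  · intro i j
    simp [signMatrix, skewExtend]

lemma det_signMatrix_of_even {m : ℕ} (hm : Even m) : (signMatrix R m).det = 1 := by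
  have h := congrArg det (diffMatrix_mul_signMatrix_mul_transpose (R := R) m)
  rwa [det_mul, det_mul, det_transpose, det_diffMatrix, det_pathSkewMatrix_of_even hm,
    one_mul, mul_one] at h

variable (R) in
def bracketMatrix (x : ℕ → R) (m : ℕ) : Matrix (Fin m) (Fin m) R :=
  of fun i j => skewExtend (fun a b => x a * (x b - x a)) (i + 1) (j + 1)

lemma diffMatrix_mul_bracketMatrix_mul_transpose {x : ℕ → R} (hx : x 0 = 0) (m : ℕ) :
    diffMatrix R m * bracketMatrix R x m * (diffMatrix R m)ᵀ
      = diagonal (fun i : Fin m => x (i + 1) - x i) * signMatrix R m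
          * diagonal (fun i : Fin m => x (i + 1) - x i) := by
  have hf : ∀ b, (fun a b => x a * (x b - x a)) 0 b = 0 := fun b => by simp [hx]
  rw [diffMatrix_mul_mul_transpose _ (skewExtend_zero_left hf) (skewExtend_zero_right hf)
    (bracketMatrix R x m) (fun _ _ => of_apply _ _ _)]
  ext i j
  simp [mixedDiff_skewExtend_mul_sub, signMatrix]

lemma det_bracketMatrix_of_even {x : ℕ → R} (hx : x 0 = 0) {m : ℕ} (hm : Even m) :
    (bracketMatrix R x m).det = (∏ i ∈ range m, (x (i + 1) - x i)) ^ 2 := by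
  have h := congrArg det (diffMatrix_mul_bracketMatrix_mul_transpose hx m)
  rw [det_mul, det_mul, det_transpose, det_diffMatrix, det_mul, det_mul, det_diagonal,
    det_signMatrix_of_even hm, one_mul, mul_one, mul_one,
    Fin.prod_univ_eq_prod_range (fun i => x (i + 1) - x i)] at h
  rw [h, sq]

lemma prod_range_succ_sub_update_zero (x : ℕ → R) {m : ℕ} (hm : m ≠ 0) :
    ∏ i ∈ range m, (Function.update x 0 0 (i + 1) - Function.update x 0 0 i)
      = x 1 * ∏ i ∈ Icc 2 m, (x i - x (i - 1)) := by
  obtain ⟨n, rfl⟩ : ∃ n, m = n + 1 := ⟨m - 1, by omega⟩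
  rw [prod_range_succ', ← Ico_add_one_right_eq_Icc, prod_Ico_eq_prod_range,
    show n + 1 + 1 - 2 = n by omega, mul_comm]
  congr 1
  · simp
  · refine prod_congr rfl fun k _ => ?_
    simp [show 2 + k = k + 1 + 1 by ring]

end GoldmanBracket

open GoldmanBracket in
/-- The determinant of the skew-symmetric Goldman bracket matrix
`A_{ij} = x_i (x_j - x_i)` (for `i < j`) is the square of its Pfaffian
`x_1 ∏_{i=2}^m (x_i - x_{i-1})`.  Indices of `x` are 1-based. -/
theorem stmt_1 (m : ℕ) (hm : 2 ≤ m) (hme : Even m) (x : ℕ → ℝ)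
    (A : Matrix (Fin m) (Fin m) ℝ)
    (hA : ∀ i j : Fin m, A i j =
      if (i : ℕ) < (j : ℕ) then x ((i : ℕ) + 1) * (x ((j : ℕ) + 1) - x ((i : ℕ) + 1))
      else if (j : ℕ) < (i : ℕ) then
        -(x ((j : ℕ) + 1) * (x ((i : ℕ) + 1) - x ((j : ℕ) + 1)))
      else 0) :
    A.det = (x 1 * ∏ i ∈ Finset.Icc 2 m, (x i - x (i - 1))) ^ 2 := by
  -- setting `x 0 := 0` makes `x 1 = x 1 - x 0` the first difference
  have hA' : A = bracketMatrix ℝ (Function.update x 0 0) m := by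
    ext i j
    simp [hA, bracketMatrix, skewExtend]
  rw [hA', det_bracketMatrix_of_even (Function.update_self 0 0 x) hme,
    prod_range_succ_sub_update_zero x (by omega)]
end

section
/- Let n ≥ 2 be an integer and P > 0 a real number. The function δ ↦ (e^P − 1) / ∏_{i=1}^{n} (e^{δ_i + δ_{i+1}} − 1) is Lebesgue-integrable over the open simplex {δ ∈ (0,∞)^{n−1} : δ_1 + ⋯ + δ_{n−1} < P}, where one sets δ_n := P − (δ_1 + ⋯ + δ_{n−1}) and δ_{n+1} := δ_1. In particular, the crown volume V(n,P) := 2^{−(n−1)} ∫ over this simplex of (e^P − 1)/∏_{i=1}^{n}(e^{δ_i+δ_{i+1}} − 1) dδ_1⋯dδ_{n−1} is finite. -/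
/-!
Write `D₀, …, D_m` (`m = n - 1`) for the cyclic coordinates, with `D_m = P - ∑ δ`. Since
`e^(a+b) - 1 ≥ a + b`, the integrand is at most `(e^P - 1) / ∏ᵢ (Dᵢ + Dᵢ₊₁)`. The `Dᵢ` sum to `P`,
so the simplex is covered by the regions `P / n ≤ D_k`. There the two factors at `k` are at least
`P / n`, and along the path through the other `m` vertices chained weighted AM-GM gives
`∏ (D_t + D_{t+1}) ≥ ∏ D_t ^ (1 - 1/m)`. Hence the integrand is dominated by a multiple of
`∏_{i ≠ k} D_i ^ (-(1 - 1/m))`. The map `δ ↦ (D_i)_{i ≠ k}` preserves volume (it is a composite of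
reflections `z_a ↦ P - ∑ z`), so this bound is a product of the integrable one-variable functions
`x ^ (-(1 - 1/m))` on `(0, P)`.
-/

open MeasureTheory

/-- Cyclic extension of the simplex coordinates: for `1 ≤ i ≤ n-1` this is `δ_i`
(the `(i-1)`-th component of `δ`), `δ_n := P - (δ_1 + ⋯ + δ_{n-1})`, and
`δ_{n+1} := δ_1`. -/
noncomputable def crownδ (n : ℕ) (P : ℝ) (δ : Fin (n - 1) → ℝ) (i : ℕ) : ℝ :=
  if h : n - 1 = 0 then 0
  else if i = n then P - ∑ j, δ j
  else if i = n + 1 then δ ⟨0, Nat.pos_of_ne_zero h⟩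
  else δ ⟨(i - 1) % (n - 1), Nat.mod_lt _ (Nat.pos_of_ne_zero h)⟩

open Finset

theorem rpow_mul_rpow_le_add {x y w : ℝ} (hx : 0 ≤ x) (hy : 0 ≤ y) (hw₀ : 0 ≤ w) (hw₁ : w ≤ 1) :
    x ^ (1 - w) * y ^ w ≤ x + y := by
  have := Real.geom_mean_le_arith_mean2_weighted (sub_nonneg.2 hw₁) hw₀ hx hy (by ring)
  nlinarith

/-- Chained weighted AM-GM: the edge `(t, t + 1)` gives weight `1 - (t + 1) / N` to `x t` and
`(t + 1) / N` to `x (t + 1)`, so every vertex collects `1 - 1 / N`. -/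
theorem prod_range_rpow_mul_rpow_le_prod_add_succ (x : ℕ → ℝ) (hx : ∀ t, 0 < x t) {N j : ℕ}
    (hj : j ≤ N) :
    (∏ t ∈ range j, x t ^ (1 - 1 / (N : ℝ))) * x j ^ ((j : ℝ) / N) ≤
      ∏ t ∈ range j, (x t + x (t + 1)) := by
  induction j with
  | zero => simp
  | succ j ih =>
    have hN : (0 : ℝ) < N := by exact_mod_cast (show 0 < N by omega)
    have hw : ((j : ℝ) + 1) / N ≤ 1 := by
      rw [div_le_one hN]; exact_mod_cast hj
    have hsplit : x j ^ (1 - 1 / (N : ℝ)) =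
        x j ^ ((j : ℝ) / N) * x j ^ (1 - ((j : ℝ) + 1) / N) := by
      rw [← Real.rpow_add (hx j)]; congr 1; field_simp; ring
    calc (∏ t ∈ range (j + 1), x t ^ (1 - 1 / (N : ℝ))) * x (j + 1) ^ (((j + 1 : ℕ) : ℝ) / N)
        = ((∏ t ∈ range j, x t ^ (1 - 1 / (N : ℝ))) * x j ^ ((j : ℝ) / N)) *
            (x j ^ (1 - ((j : ℝ) + 1) / N) * x (j + 1) ^ (((j : ℝ) + 1) / N)) := by
          rw [prod_range_succ, hsplit]; push_cast; ring
      _ ≤ (∏ t ∈ range j, (x t + x (t + 1))) * (x j + x (j + 1)) := by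
          refine mul_le_mul (ih (by omega))
            (rpow_mul_rpow_le_add (hx j).le (hx _).le (by positivity) hw)
            (mul_nonneg (Real.rpow_nonneg (hx j).le _) (Real.rpow_nonneg (hx _).le _)) ?_
          exact prod_nonneg fun t _ => (add_pos (hx t) (hx (t + 1))).le
      _ = ∏ t ∈ range (j + 1), (x t + x (t + 1)) := (prod_range_succ _ _).symm

theorem prod_range_rpow_le_prod_add_succ (x : ℕ → ℝ) (hx : ∀ t, 0 < x t) (M : ℕ) :
    ∏ t ∈ range (M + 1), x t ^ (1 - 1 / ((M + 1 : ℕ) : ℝ)) ≤ ∏ t ∈ range M, (x t + x (t + 1)) := by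
  convert prod_range_rpow_mul_rpow_le_prod_add_succ x hx (N := M + 1) (j := M) (by omega) using 1
  rw [prod_range_succ]
  congr 2
  push_cast
  field_simp
  ring

theorem sq_mul_prod_range_rpow_le_prod_add_succ (x : ℕ → ℝ) (hx : ∀ t, 0 < x t) (M : ℕ) {c : ℝ}
    (hc : 0 ≤ c) (hcx : c ≤ x (M + 1)) :
    c ^ 2 * ∏ t ∈ range (M + 1), x t ^ (1 - 1 / ((M + 1 : ℕ) : ℝ)) ≤
      ∏ t ∈ range (M + 2), (x t + x (t + 1)) := by
  have hpath := prod_range_rpow_le_prod_add_succ x hx M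
  have hpath_nonneg : 0 ≤ ∏ t ∈ range M, (x t + x (t + 1)) :=
    prod_nonneg fun t _ => (add_pos (hx t) (hx (t + 1))).le
  calc c ^ 2 * ∏ t ∈ range (M + 1), x t ^ (1 - 1 / ((M + 1 : ℕ) : ℝ))
      ≤ (∏ t ∈ range M, (x t + x (t + 1))) * (c * c) := by
        rw [mul_comm, sq]; gcongr
    _ ≤ (∏ t ∈ range M, (x t + x (t + 1))) * ((x M + x (M + 1)) * (x (M + 1) + x (M + 2))) := by
        gcongr <;> linarith [hx M, hx (M + 2)]
    _ = ∏ t ∈ range (M + 2), (x t + x (t + 1)) := by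
        rw [prod_range_succ, prod_range_succ, mul_assoc]

theorem prod_Icc_one_eq_prod_fin {M : Type*} [CommMonoid M] (n : ℕ) (F : ℕ → M) :
    ∏ i ∈ Icc 1 n, F i = ∏ i : Fin n, F (i + 1) := by
  rw [Fin.prod_univ_eq_prod_range (fun i => F (i + 1)), range_eq_Ico, prod_Ico_add' F 0 n 1,
    zero_add, Ico_add_one_right_eq_Icc]

section Rotation

open Fin.NatCast

theorem prod_univ_eq_prod_range_add {M : Type*} [CommMonoid M] {m : ℕ} (k : Fin (m + 1))
    (F : Fin (m + 1) → M) : ∏ i, F i = ∏ t ∈ range (m + 1), F (k + (t : Fin (m + 1))) := by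
  rw [← Equiv.prod_comp (Equiv.addLeft k) F, ← Fin.prod_univ_eq_prod_range (fun t => F (k + t))]
  simp

theorem sq_mul_prod_succAbove_rpow_le_prod_add_succ {m : ℕ} (hm : 0 < m)
    (x : Fin (m + 1) → ℝ) (hx : ∀ i, 0 < x i) (k : Fin (m + 1)) {c : ℝ} (hc : 0 ≤ c)
    (hcx : c ≤ x k) :
    c ^ 2 * ∏ j : Fin m, x (k.succAbove j) ^ (1 - 1 / (m : ℝ)) ≤ ∏ i, (x i + x (i + 1)) := by
  obtain ⟨M, rfl⟩ : ∃ M, m = M + 1 := ⟨m - 1, by omega⟩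
  set y : ℕ → ℝ := fun t => x (k + 1 + (t : Fin (M + 2)))
  have hy_last : y (M + 1) = x k := by
    simp only [y, Fin.natCast_eq_last, add_assoc, add_comm (1 : Fin (M + 2)), Fin.last_add_one,
      add_zero]
  have hcycle : ∏ i, (x i + x (i + 1)) = ∏ t ∈ range (M + 2), (y t + y (t + 1)) := by
    rw [prod_univ_eq_prod_range_add (k + 1)]
    simp only [y, Nat.cast_succ, add_assoc]
  have hpath : ∏ j : Fin (M + 1), x (k.succAbove j) ^ (1 - 1 / ((M + 1 : ℕ) : ℝ)) =
      ∏ t ∈ range (M + 1), y t ^ (1 - 1 / ((M + 1 : ℕ) : ℝ)) := by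
    refine mul_left_cancel₀ (Real.rpow_pos_of_pos (hx k) (1 - 1 / ((M + 1 : ℕ) : ℝ))).ne' ?_
    rw [← Fin.prod_univ_succAbove (fun i => x i ^ (1 - 1 / ((M + 1 : ℕ) : ℝ))) k,
      prod_univ_eq_prod_range_add (k + 1)]
    change ∏ t ∈ range (M + 1 + 1), y t ^ _ = _
    rw [prod_range_succ, hy_last, mul_comm]
  rw [hcycle, hpath]
  exact sq_mul_prod_range_rpow_le_prod_add_succ y (fun t => hx _) M hc (hy_last ▸ hcx)

end Rotation

/-- Through `piFinSuccAbove` at `a` this is the shear `(s, w) ↦ (P - ∑ w - s, w)`. -/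
theorem measurePreserving_update_sub_sum {m : ℕ} (P : ℝ) (a : Fin m) :
    MeasurePreserving (fun z : Fin m → ℝ => Function.update z a (P - ∑ i, z i)) := by
  cases m with
  | zero => exact a.elim0
  | succ m =>
  let e := MeasurableEquiv.piFinSuccAbove (fun _ : Fin (m + 1) => ℝ) a
  have he : MeasurePreserving e := volume_preserving_piFinSuccAbove _ a
  have hskew : MeasurePreserving (fun q : (Fin m → ℝ) × ℝ => (q.1, P - ∑ i, q.1 i - q.2)) :=
    (MeasurePreserving.id volume).skew_product (by fun_prop)
      (ae_of_all _ fun (w : Fin m → ℝ) =>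
        (Measure.measurePreserving_sub_left volume (P - ∑ i, w i)).map_eq)
  have hreflect : MeasurePreserving (fun p : ℝ × (Fin m → ℝ) => (P - ∑ i, p.2 i - p.1, p.2)) :=
    (Measure.measurePreserving_swap.comp hskew).comp Measure.measurePreserving_swap
  convert he.symm.comp (hreflect.comp he) using 1
  ext z : 1
  have hsum := Fin.sum_univ_succAbove z a
  simp only [Function.comp_apply, e, MeasurableEquiv.piFinSuccAbove_apply,
    MeasurableEquiv.piFinSuccAbove_symm_apply, Fin.insertNthEquiv_symm_apply,
    ← Fin.insertNth_removeNth]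
  congr 1
  simp only [Fin.removeNth]
  linarith

theorem integrable_indicator_Ioo_rpow_neg {P β : ℝ} (hP : 0 < P) (hβ : β < 1) :
    Integrable ((Set.Ioo 0 P).indicator fun x : ℝ => x ^ (-β)) :=
  (integrable_indicator_iff measurableSet_Ioo).2
    ((intervalIntegral.integrableOn_Ioo_rpow_iff hP).2 (by linarith))

/-- `crownCoords P δ i` is the paper's `δ_{i+1}`; its last entry is `δ_n = P - ∑ δ`, and
`δ_{n+1} = δ_1` becomes addition in `Fin (m + 1)`. -/
noncomputable def crownCoords {m : ℕ} (P : ℝ) (δ : Fin m → ℝ) : Fin (m + 1) → ℝ :=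
  Fin.snoc δ (P - ∑ i, δ i)

noncomputable def crownIntegrand {m : ℕ} (P : ℝ) (δ : Fin m → ℝ) : ℝ :=
  (Real.exp P - 1) /
    ∏ i, (Real.exp (crownCoords P δ i + crownCoords P δ (i + 1)) - 1)

section Crown

variable {m : ℕ} {P : ℝ}

@[simp] theorem crownCoords_castSucc (δ : Fin m → ℝ) (j : Fin m) :
    crownCoords P δ j.castSucc = δ j := Fin.snoc_castSucc ..

@[simp] theorem crownCoords_last (δ : Fin m → ℝ) :
    crownCoords P δ (Fin.last m) = P - ∑ i, δ i := Fin.snoc_last ..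

theorem sum_crownCoords (δ : Fin m → ℝ) : ∑ i, crownCoords P δ i = P := by
  simp [Fin.sum_univ_castSucc]

theorem continuous_crownCoords : Continuous (crownCoords (m := m) P) := by
  refine continuous_pi fun i => Fin.lastCases ?_ (fun j => ?_) i
  · simp only [crownCoords_last]; fun_prop
  · simp only [crownCoords_castSucc]; fun_prop

theorem measurable_crownIntegrand : Measurable (crownIntegrand (m := m) P) := by
  have := continuous_crownCoords (m := m) (P := P)
  unfold crownIntegrand
  fun_prop

theorem crownCoords_pos {δ : Fin m → ℝ} (hδ : ∀ i, 0 < δ i) (hsum : ∑ i, δ i < P)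
    (i : Fin (m + 1)) : 0 < crownCoords P δ i := by
  induction i using Fin.lastCases with
  | last => simpa using hsum
  | cast j => simpa using hδ j

theorem crownCoords_lt (hm : 0 < m) {δ : Fin m → ℝ} (hδ : ∀ i, 0 < δ i) (hsum : ∑ i, δ i < P)
    (i : Fin (m + 1)) : crownCoords P δ i < P := by
  have hrest : 0 < ∑ j : Fin m, crownCoords P δ (i.succAbove j) :=
    sum_pos (fun j _ => crownCoords_pos hδ hsum _) (univ_nonempty_iff.2 ⟨⟨0, hm⟩⟩)
  linarith [sum_crownCoords (P := P) δ, Fin.sum_univ_succAbove (crownCoords P δ) i]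

theorem removeNth_castSucc_crownCoords (a : Fin m) (δ : Fin m → ℝ) :
    a.castSucc.removeNth (crownCoords P δ) =
      Function.update (a.succ.removeNth (crownCoords P δ)) a
        (P - ∑ j, a.succ.removeNth (crownCoords P δ) j) := by
  ext j
  rcases eq_or_ne j a with rfl | hj
  · have := Fin.sum_univ_succAbove (crownCoords P δ) j.succ
    rw [sum_crownCoords] at this
    simp only [Fin.removeNth, Function.update_self, Fin.succAbove_castSucc_self]
    linarith
  · rw [Function.update_of_ne hj]
    simp only [Fin.removeNth]
    rcases hj.lt_or_gt with h | h
    · rw [Fin.succAbove_castSucc_of_lt _ _ h, Fin.succAbove_succ_of_le _ _ h.le]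
    · rw [Fin.succAbove_castSucc_of_le _ _ h.le, Fin.succAbove_succ_of_lt _ _ h]

theorem measurePreserving_removeNth_crownCoords (k : Fin (m + 1)) :
    MeasurePreserving (fun δ : Fin m → ℝ => k.removeNth (crownCoords P δ)) := by
  induction k using Fin.reverseInduction with
  | last =>
    simp only [Fin.removeNth_last, crownCoords, Fin.init_snoc]
    exact MeasurePreserving.id volume
  | cast a ih =>
    simp_rw [removeNth_castSucc_crownCoords]
    exact (measurePreserving_update_sub_sum P a).comp ih

theorem crownδ_eq_crownCoords (hm : 0 < m) (δ : Fin m → ℝ) (i : Fin (m + 1)) :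
    crownδ (m + 1) P δ (i + 1) = crownCoords P δ i := by
  have hm' : m + 1 - 1 ≠ 0 := by omega
  induction i using Fin.lastCases with
  | last => simp [crownδ, hm.ne']
  | cast j =>
    have hj := j.2
    rw [crownδ, dif_neg hm', if_neg (by simp; omega), if_neg (by simp; omega),
      crownCoords_castSucc]
    congr 1
    ext
    simp [Nat.mod_eq_of_lt hj]

theorem crownδ_add_one_eq_crownCoords (hm : 0 < m) (δ : Fin m → ℝ) (i : Fin (m + 1)) :
    crownδ (m + 1) P δ (i + 1 + 1) = crownCoords P δ (i + 1) := by
  rcases Fin.eq_castSucc_or_eq_last i with ⟨j, rfl⟩ | rfl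
  · rw [← crownδ_eq_crownCoords hm, Fin.coeSucc_eq_succ, Fin.val_succ, Fin.val_castSucc]
  · rw [Fin.last_add_one, crownδ, dif_neg (by omega), if_neg (by simp), if_pos (by simp)]
    rw [show (0 : Fin (m + 1)) = Fin.castSucc ⟨0, hm⟩ from rfl, crownCoords_castSucc]

theorem crownIntegrand_eq (hm : 0 < m) (δ : Fin m → ℝ) :
    (Real.exp P - 1) /
        ∏ i ∈ Icc 1 (m + 1), (Real.exp (crownδ (m + 1) P δ i + crownδ (m + 1) P δ (i + 1)) - 1) =
      crownIntegrand P δ := by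
  rw [prod_Icc_one_eq_prod_fin, crownIntegrand]
  simp only [crownδ_eq_crownCoords hm, crownδ_add_one_eq_crownCoords hm]

theorem norm_crownIntegrand_le (hm : 0 < m) {δ : Fin m → ℝ} (hδ : ∀ i, 0 < δ i)
    (hsum : ∑ i, δ i < P) {k : Fin (m + 1)} {c : ℝ} (hc : 0 < c) (hck : c ≤ crownCoords P δ k) :
    ‖crownIntegrand P δ‖ ≤ (Real.exp P - 1) / c ^ 2 *
      ∏ j, (Set.Ioo 0 P).indicator (fun x => x ^ (-(1 - 1 / (m : ℝ))))
        (k.removeNth (crownCoords P δ) j) := by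
  rw [crownIntegrand]
  set D := crownCoords P δ
  have hD : ∀ i, 0 < D i := crownCoords_pos hδ hsum
  have hDP : ∀ i, D i < P := crownCoords_lt hm hδ hsum
  set Q := ∏ j, D (k.succAbove j) ^ (1 - 1 / (m : ℝ))
  have hQ : 0 < Q := prod_pos fun j _ => Real.rpow_pos_of_pos (hD _) _
  have hden : c ^ 2 * Q ≤ ∏ i, (Real.exp (D i + D (i + 1)) - 1) := by
    refine (sq_mul_prod_succAbove_rpow_le_prod_add_succ hm D hD k hc.le hck).trans ?_
    refine prod_le_prod (fun i _ => (add_pos (hD i) (hD (i + 1))).le) fun i _ => ?_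
    linarith [Real.add_one_le_exp (D i + D (i + 1))]
  have hdom : ∏ j, (Set.Ioo 0 P).indicator (fun x => x ^ (-(1 - 1 / (m : ℝ))))
      (k.removeNth D j) = Q⁻¹ := by
    rw [← prod_inv_distrib]
    refine prod_congr rfl fun j _ => ?_
    rw [Fin.removeNth, Set.indicator_of_mem (show D (k.succAbove j) ∈ Set.Ioo 0 P from
      ⟨hD _, hDP _⟩), Real.rpow_neg (hD _).le]
  have hnum : 0 ≤ Real.exp P - 1 := by linarith [Real.add_one_le_exp P, hD k, hDP k]
  have hden_pos : 0 < c ^ 2 * Q := by positivity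
  rw [hdom, Real.norm_of_nonneg (div_nonneg hnum (hden_pos.trans_le hden).le)]
  calc (Real.exp P - 1) / ∏ i, (Real.exp (D i + D (i + 1)) - 1)
      ≤ (Real.exp P - 1) / (c ^ 2 * Q) := div_le_div_of_nonneg_left hnum hden_pos hden
    _ = (Real.exp P - 1) / c ^ 2 * Q⁻¹ := by ring

theorem integrable_prod_indicator_removeNth_crownCoords {β : ℝ} (hP : 0 < P)
    (hβ : β < 1) (k : Fin (m + 1)) :
    Integrable fun δ : Fin m → ℝ =>
      ∏ j, (Set.Ioo 0 P).indicator (fun x => x ^ (-β)) (k.removeNth (crownCoords P δ) j) := by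
  have hprod : Integrable fun z : Fin m → ℝ =>
      ∏ j, (Set.Ioo 0 P).indicator (fun x => x ^ (-β)) (z j) :=
    Integrable.fintype_prod fun _ => integrable_indicator_Ioo_rpow_neg hP hβ
  exact ((measurePreserving_removeNth_crownCoords k).integrable_comp
    hprod.aestronglyMeasurable).2 hprod

theorem integrableOn_crownIntegrand (hm : 0 < m) (hP : 0 < P) :
    IntegrableOn (crownIntegrand P) {δ : Fin m → ℝ | (∀ i, 0 < δ i) ∧ ∑ i, δ i < P} := by
  set S := {δ : Fin m → ℝ | (∀ i, 0 < δ i) ∧ ∑ i, δ i < P}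
  have hcover : S ⊆ ⋃ k, S ∩ {δ | P / (m + 1) ≤ crownCoords P δ k} := by
    intro δ hδ
    have havg : ∑ _k : Fin (m + 1), P / (m + 1) ≤ ∑ k, crownCoords P δ k := by
      rw [sum_crownCoords, sum_const, card_univ, Fintype.card_fin, nsmul_eq_mul]
      push_cast
      exact (mul_div_cancel₀ P (by positivity)).le
    obtain ⟨k, -, hk⟩ := exists_le_of_sum_le univ_nonempty havg
    exact Set.mem_iUnion.2 ⟨k, hδ, hk⟩
  refine (integrableOn_finite_iUnion.2 fun k => ?_).mono_set hcover
  have hmeas : MeasurableSet (S ∩ {δ | P / (m + 1) ≤ crownCoords P δ k}) := by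
    have hS : MeasurableSet S := by measurability
    exact hS.inter (measurableSet_le measurable_const
      ((continuous_apply k).comp continuous_crownCoords).measurable)
  have hβ : 1 - 1 / (m : ℝ) < 1 := by simp [hm]
  have hdom := (integrable_prod_indicator_removeNth_crownCoords hP hβ k).const_mul
    ((Real.exp P - 1) / (P / (m + 1)) ^ 2)
  refine hdom.integrableOn.mono' measurable_crownIntegrand.aestronglyMeasurable
    (ae_restrict_of_forall_mem hmeas ?_)
  rintro δ ⟨⟨hδ, hsum⟩, hk⟩
  exact norm_crownIntegrand_le hm hδ hsum (by positivity) hk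

end Crown

/-- The integrand of the crown volume `V(n,P)` is Lebesgue-integrable over the
open simplex `{δ ∈ (0,∞)^{n-1} : δ_1 + ⋯ + δ_{n-1} < P}`; in particular the
crown volume is finite. -/
theorem stmt_2 (n : ℕ) (hn : 2 ≤ n) (P : ℝ) (hP : 0 < P) :
    IntegrableOn
      (fun δ : Fin (n - 1) → ℝ =>
        (Real.exp P - 1) /
          ∏ i ∈ Finset.Icc 1 n,
            (Real.exp (crownδ n P δ i + crownδ n P δ (i + 1)) - 1))
      {δ : Fin (n - 1) → ℝ | (∀ i, 0 < δ i) ∧ ∑ i, δ i < P} := by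
  obtain ⟨m, rfl⟩ : ∃ m, n = m + 1 := ⟨n - 1, by omega⟩
  have hm : 0 < m := by omega
  simp_rw [crownIntegrand_eq hm]
  exact integrableOn_crownIntegrand hm hP
end

section
/- Let m ≥ 2 be an even integer. Let A be the m×m matrix with A_{ij} = 1 for i < j, A_{ij} = −1 for i > j, and A_{ii} = 0, and let B be the m×m matrix with B_{ij} = (−1)^{i+j} for i < j, B_{ij} = −(−1)^{i+j} for i > j, and B_{ii} = 0. Then A·B is the identity matrix; in particular A is invertible with A^{-1} = B. -/
/-!
With `D = diag((-1)^i)` one has `B = D A D`, so `A B = (A D)^2` and it suffices that `A D` is an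
involution. The `(i, j)` entry of `(A D)^2` is `(-1)^j ∑_k sgn(k - i) sgn(j - k) (-1)^k`. For
`i ≤ j` the product of signs is `[i ≤ k < j] + [i < k ≤ j] - 1` (plus `[k = i]` when `i = j`):
the two interval sums of `(-1)^k` cancel each other, and the constant `-1` contributes
`-∑_{k<m} (-1)^k = 0` because `m` is even.
-/

open Finset Matrix

variable {R : Type*}

section Ring

variable [Ring R]

def skewSign (a b : ℕ) : R := if a < b then 1 else if b < a then -1 else 0

lemma sum_Ico_neg_one_pow_add_sum_Ico_succ (a b : ℕ) :
    ∑ k ∈ Ico a b, (-1 : R) ^ k + ∑ k ∈ Ico (a + 1) (b + 1), (-1 : R) ^ k = 0 := by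
  rw [← sum_Ico_add', ← sum_add_distrib]
  exact sum_eq_zero fun k _ => by rw [pow_succ, mul_neg_one, add_neg_cancel]

lemma skewSign_mul_skewSign (i j k : ℕ) :
    (skewSign i k * skewSign k j : R) =
      (if k ∈ Ico (min i j) (max i j) then 1 else 0) +
        (if k ∈ Ico (min i j + 1) (max i j + 1) then 1 else 0) - 1 +
          if i = j ∧ k = i then 1 else 0 := by
  unfold skewSign
  simp only [mem_Ico]
  split_ifs <;> first | omega | norm_num

lemma sum_range_neg_one_pow_mul_skewSign_mul_skewSign {m i j : ℕ} (hm : Even m)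
    (hi : i < m) (hj : j < m) :
    ∑ k ∈ range m, (-1 : R) ^ k * (skewSign i k * skewSign k j) =
      if i = j then (-1) ^ i else 0 := by
  have hsub₁ : Ico (min i j) (max i j) ⊆ range m := fun k hk => by
    simp only [mem_Ico, mem_range] at hk ⊢; omega
  have hsub₂ : Ico (min i j + 1) (max i j + 1) ⊆ range m := fun k hk => by
    simp only [mem_Ico, mem_range] at hk ⊢; omega
  simp only [skewSign_mul_skewSign, mul_add, mul_sub, mul_boole, mul_one, sum_add_distrib,
    sum_sub_distrib, sum_ite_mem, inter_eq_right.2 hsub₁, inter_eq_right.2 hsub₂,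
    sum_Ico_neg_one_pow_add_sum_Ico_succ, neg_one_geom_sum, if_pos hm]
  split_ifs with hij
  · subst hij
    simp [hi]
  · simp [hij]

end Ring

section CommRing

variable [CommRing R]

def skewOnes (m : ℕ) : Matrix (Fin m) (Fin m) R := of fun i j => skewSign i j

def altSigns (m : ℕ) : Matrix (Fin m) (Fin m) R := diagonal fun i => (-1) ^ (i : ℕ)

theorem skewOnes_mul_altSigns_sq {m : ℕ} (hm : Even m) :
    (skewOnes m * altSigns m : Matrix (Fin m) (Fin m) R) ^ 2 = 1 := by
  set M : Matrix (Fin m) (Fin m) R := skewOnes m * altSigns m with hM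
  ext i j
  have hterm : ∀ k : Fin m, M i k * M k j =
        (-1) ^ (j : ℕ) * ((-1) ^ (k : ℕ) * (skewSign i k * skewSign k j)) := fun k => by
    simp only [hM, skewOnes, altSigns, mul_diagonal, of_apply]
    ring
  rw [sq, mul_apply, Fintype.sum_congr _ _ hterm, ← mul_sum,
    Fin.sum_univ_eq_sum_range (fun k => (-1) ^ k * (skewSign (i : ℕ) k * skewSign k j)),
    sum_range_neg_one_pow_mul_skewSign_mul_skewSign hm i.isLt j.isLt, one_apply]
  simp only [Fin.val_inj]
  split_ifs with hij
  · rw [hij, ← pow_add, Even.neg_one_pow ⟨_, rfl⟩]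
  · rw [mul_zero]

end CommRing

theorem stmt_4_general (m : ℕ) (hme : Even m)
    (A B : Matrix (Fin m) (Fin m) ℝ)
    (hA : ∀ i j : Fin m, A i j =
      if (i : ℕ) < (j : ℕ) then 1 else if (j : ℕ) < (i : ℕ) then -1 else 0)
    (hB : ∀ i j : Fin m, B i j =
      if (i : ℕ) < (j : ℕ) then (-1 : ℝ) ^ ((i : ℕ) + (j : ℕ))
      else if (j : ℕ) < (i : ℕ) then -((-1 : ℝ) ^ ((i : ℕ) + (j : ℕ)))
      else 0) :
    A * B = 1 ∧ IsUnit A ∧ A⁻¹ = B := by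
  have hA' : A = skewOnes m := Matrix.ext hA
  have hB' : B = altSigns m * skewOnes m * altSigns m := by
    ext i j
    rw [hB]
    simp only [altSigns, skewOnes, skewSign, diagonal_mul, mul_diagonal, of_apply]
    split_ifs <;> ring
  have hAB : A * B = 1 := by
    rw [hA', hB']
    simpa only [sq, Matrix.mul_assoc] using skewOnes_mul_altSigns_sq (R := ℝ) hme
  exact ⟨hAB, A.isUnit_iff_isUnit_det.mpr (isUnit_det_of_right_inverse hAB),
    inv_eq_right_inv hAB⟩

/-- For even `m`, the Poisson matrix `A` of the coordinates `log ξ_i`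
(`A_{ij} = 1` for `i < j`) is inverted by `B_{ij} = (-1)^{i+j}` for `i < j`
(extended skew-symmetrically). -/
theorem stmt_4 (m : ℕ) (hm : 2 ≤ m) (hme : Even m)
    (A B : Matrix (Fin m) (Fin m) ℝ)
    (hA : ∀ i j : Fin m, A i j =
      if (i : ℕ) < (j : ℕ) then 1 else if (j : ℕ) < (i : ℕ) then -1 else 0)
    (hB : ∀ i j : Fin m, B i j =
      if (i : ℕ) < (j : ℕ) then (-1 : ℝ) ^ ((i : ℕ) + (j : ℕ))
      else if (j : ℕ) < (i : ℕ) then -((-1 : ℝ) ^ ((i : ℕ) + (j : ℕ)))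
      else 0) :
    A * B = 1 ∧ IsUnit A ∧ A⁻¹ = B :=
  stmt_4_general m hme A B hA hB
end

section
/- Let n ≥ 2 be an integer, P > 0, and 0 = Δ_0 < Δ_1 < … < Δ_{n−1} < Δ_n = P real numbers. Set x_i := sinh(Δ_i/2)/sinh((P−Δ_i)/2) for i = 1, …, n−1 and δ_i := Δ_i − Δ_{i−1} for i = 1, …, n. Then ∏_{i=1}^{n−1} [ (1/2)·sinh(P/2)/sinh((P−Δ_i)/2)² ] = ( x_1 · ∏_{i=2}^{n−1} (x_i − x_{i−1}) ) · sinh(P/2) / ( 2^{n−1} · ∏_{i=1}^{n} sinh(δ_i/2) ). -/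
/-!
Write `s_i = sinh ((P - Δ_i) / 2)` and extend the coordinates by `x_0 = 0`, which agrees with the
formula for `x_i` because `Δ_0 = 0`. The subtraction formula for `sinh` gives, for `1 ≤ i ≤ n - 1`,
`x_i - x_{i-1} = sinh (P / 2) sinh (δ_i / 2) / (s_i s_{i-1})`.
Multiplying these, the factors `sinh (δ_i / 2)` cancel against the denominator, and the shifted
product of the `s_{i-1}` turns into that of the `s_i` because `s_0 = sinh (P / 2)` and
`sinh (δ_n / 2) = s_{n-1}`.
-/

open Finset Real

theorem Real.sinh_half_div_sub_sinh_half_div (P a c : ℝ) (ha : sinh ((P - a) / 2) ≠ 0)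
    (hc : sinh ((P - c) / 2) ≠ 0) :
    sinh (a / 2) / sinh ((P - a) / 2) - sinh (c / 2) / sinh ((P - c) / 2) =
      sinh (P / 2) * sinh ((a - c) / 2) / (sinh ((P - a) / 2) * sinh ((P - c) / 2)) := by
  rw [div_sub_div _ _ ha hc]
  congr 1
  simp only [sub_div, sinh_sub]
  ring

theorem Finset.prod_Icc_one_eq_mul_prod_Icc_two {M : Type*} [CommMonoid M] (f : ℕ → M) {m : ℕ}
    (hm : 1 ≤ m) : ∏ i ∈ Icc 1 m, f i = f 1 * ∏ i ∈ Icc 2 m, f i := by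
  rw [← mul_prod_Ioc_eq_prod_Icc hm, ← Icc_add_one_left_eq_Ioc]
  rfl

theorem Finset.prod_Icc_one_pred_mul {M : Type*} [CommMonoid M] (f : ℕ → M) (m : ℕ) :
    (∏ i ∈ Icc 1 m, f (i - 1)) * f m = f 0 * ∏ i ∈ Icc 1 m, f i := by
  induction m with
  | zero => simp
  | succ m ih =>
    rw [prod_Icc_succ_top (by omega), prod_Icc_succ_top (by omega), Nat.add_sub_cancel,
      ← mul_assoc, ih]

theorem mul_prod_Icc_two_sub_eq_prod_Icc_one_sub {R : Type*} [CommRing R] (x X : ℕ → R) {m : ℕ}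
    (hm : 1 ≤ m) (hX0 : X 0 = 0) (hx : ∀ i ∈ Icc 1 m, x i = X i) :
    x 1 * ∏ i ∈ Icc 2 m, (x i - x (i - 1)) = ∏ i ∈ Icc 1 m, (X i - X (i - 1)) := by
  rw [prod_Icc_one_eq_mul_prod_Icc_two _ hm, Nat.sub_self, hX0, sub_zero,
    hx 1 (left_mem_Icc.2 hm)]
  congr 1
  refine prod_congr rfl fun i hi => ?_
  have hi := mem_Icc.1 hi
  rw [hx i (mem_Icc.2 ⟨by omega, hi.2⟩), hx (i - 1) (mem_Icc.2 ⟨by omega, by omega⟩)]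

theorem prod_half_mul_div_sq_eq (s d : ℕ → ℝ) (h : ℝ) (m : ℕ) (hs : ∀ i ≤ m, s i ≠ 0)
    (hd : ∀ i ∈ Icc 1 m, d i ≠ 0) (hs0 : s 0 = h) (hd_top : d (m + 1) = s m) :
    ∏ i ∈ Icc 1 m, (1 / 2 * h / s i ^ 2) =
      (∏ i ∈ Icc 1 m, (h * d i / (s i * s (i - 1)))) * h /
        (2 ^ m * ∏ i ∈ Icc 1 (m + 1), d i) := by
  have hshift := prod_Icc_one_pred_mul s m
  rw [hs0] at hshift
  have hS : ∏ i ∈ Icc 1 m, s i ≠ 0 := prod_ne_zero_iff.2 fun i hi => hs i (mem_Icc.1 hi).2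
  have hS' : ∏ i ∈ Icc 1 m, s (i - 1) ≠ 0 :=
    prod_ne_zero_iff.2 fun i hi => hs _ (by have := (mem_Icc.1 hi).2; omega)
  have hD : ∏ i ∈ Icc 1 m, d i ≠ 0 := prod_ne_zero_iff.2 hd
  have hsm := hs m le_rfl
  rw [prod_Icc_succ_top (by omega), hd_top]
  simp only [prod_div_distrib, prod_mul_distrib, prod_const, prod_pow, Nat.card_Icc,
    Nat.add_sub_cancel, one_div, inv_pow]
  field_simp
  linear_combination h ^ m * hshift

theorem stmt_7_general (n : ℕ) (hn : 2 ≤ n) (P : ℝ) (Δ x δ : ℕ → ℝ)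
    (hΔ0 : Δ 0 = 0) (hΔn : Δ n = P)
    (hΔ : ∀ i, i < n → Δ i < Δ (i + 1))
    (hx : ∀ i, 1 ≤ i → i ≤ n - 1 →
      x i = Real.sinh (Δ i / 2) / Real.sinh ((P - Δ i) / 2))
    (hδ : ∀ i, 1 ≤ i → i ≤ n → δ i = Δ i - Δ (i - 1)) :
    ∏ i ∈ Finset.Icc 1 (n - 1),
        (1 / 2 * Real.sinh (P / 2) / (Real.sinh ((P - Δ i) / 2)) ^ 2) =
      (x 1 * ∏ i ∈ Finset.Icc 2 (n - 1), (x i - x (i - 1))) * Real.sinh (P / 2) /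
        (2 ^ (n - 1) * ∏ i ∈ Finset.Icc 1 n, Real.sinh (δ i / 2)) := by
  obtain ⟨m, rfl⟩ : ∃ m, n = m + 1 := ⟨n - 1, by omega⟩
  rw [Nat.add_sub_cancel] at hx ⊢
  have hΔ_lt : ∀ i j, i < j → j ≤ m + 1 → Δ i < Δ j := fun i j hij hj =>
    strictMonoOn_Iic_of_lt_succ hΔ (Set.mem_Iic.2 (by omega)) (Set.mem_Iic.2 hj) hij
  have hs : ∀ i ≤ m, sinh ((P - Δ i) / 2) ≠ 0 := fun i hi =>
    (sinh_pos_iff.2 (by linarith [hΔ_lt i (m + 1) (by omega) le_rfl])).ne'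
  have hd : ∀ i ∈ Icc 1 m, sinh (δ i / 2) ≠ 0 := fun i hi => by
    have hi := mem_Icc.1 hi
    rw [hδ i hi.1 (by omega)]
    exact (sinh_pos_iff.2 (by linarith [hΔ_lt (i - 1) i (by omega) (by omega)])).ne'
  have hdiff : ∀ i ∈ Icc 1 m,
      sinh (Δ i / 2) / sinh ((P - Δ i) / 2) - sinh (Δ (i - 1) / 2) / sinh ((P - Δ (i - 1)) / 2) =
        sinh (P / 2) * sinh (δ i / 2) / (sinh ((P - Δ i) / 2) * sinh ((P - Δ (i - 1)) / 2)) :=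
    fun i hi => by
      have hi := mem_Icc.1 hi
      rw [sinh_half_div_sub_sinh_half_div _ _ _ (hs i hi.2) (hs (i - 1) (by omega)),
        hδ i hi.1 (by omega)]
  rw [mul_prod_Icc_two_sub_eq_prod_Icc_one_sub x
      (fun i => sinh (Δ i / 2) / sinh ((P - Δ i) / 2)) (by omega) (by simp [hΔ0])
      fun i hi => hx i (mem_Icc.1 hi).1 (mem_Icc.1 hi).2, prod_congr rfl hdiff]
  exact prod_half_mul_div_sq_eq (fun i => sinh ((P - Δ i) / 2)) (fun i => sinh (δ i / 2)) _ m
    hs hd (by simp [hΔ0]) (by simp [hδ (m + 1) (by omega) le_rfl, hΔn])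

/-- The Jacobian of the change of variables `x_i ↦ Δ_i` on the fool's crown:
the Weil–Petersson volume density transforms into
`sinh(P/2) / (2^{n-1} ∏ sinh(δ_i/2))`. -/
theorem stmt_7 (n : ℕ) (hn : 2 ≤ n) (P : ℝ) (hP : 0 < P) (Δ x δ : ℕ → ℝ)
    (hΔ0 : Δ 0 = 0) (hΔn : Δ n = P)
    (hΔ : ∀ i, i < n → Δ i < Δ (i + 1))
    (hx : ∀ i, 1 ≤ i → i ≤ n - 1 →
      x i = Real.sinh (Δ i / 2) / Real.sinh ((P - Δ i) / 2))
    (hδ : ∀ i, 1 ≤ i → i ≤ n → δ i = Δ i - Δ (i - 1)) :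
    ∏ i ∈ Finset.Icc 1 (n - 1),
        (1 / 2 * Real.sinh (P / 2) / (Real.sinh ((P - Δ i) / 2)) ^ 2) =
      (x 1 * ∏ i ∈ Finset.Icc 2 (n - 1), (x i - x (i - 1))) * Real.sinh (P / 2) /
        (2 ^ (n - 1) * ∏ i ∈ Finset.Icc 1 n, Real.sinh (δ i / 2)) :=
  stmt_7_general n hn P Δ x δ hΔ0 hΔn hΔ hx hδ
end

section
/- ∫_0^1 ( ∫_0^{1−a_2} 1/((a_1 + a_2)·(1 − a_1)) da_1 ) da_2 = π²/6. -/
/-!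
For `0 < a`, partial fractions give the inner integral as `-2 log a / (1 + a)`.
Expanding `1 / (1 + a)` as a geometric series and integrating termwise with
`∫₀¹ aⁿ log a da = -1 / (n + 1)²` turns the outer integral into `2 η(2)`, and
`η(2) = ∑ (-1)ⁿ / (n + 1)² = π² / 12` is the Fourier series of the Bernoulli polynomial `B₂`
evaluated at `1 / 2`.
-/

open Real MeasureTheory intervalIntegral Set

lemma integral_one_div_add_mul_one_sub {a : ℝ} (ha : 0 < a) :
    ∫ x in (0:ℝ)..(1 - a), 1 / ((x + a) * (1 - x)) = -2 * (log a / (1 + a)) := by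
  have hpos : ∀ x ∈ uIcc 0 (1 - a), 0 < x + a ∧ 0 < 1 - x := by
    intro x hx
    rcases mem_uIcc.1 hx with h | h <;> exact ⟨by linarith [h.1], by linarith [h.2]⟩
  have hderiv : ∀ x ∈ uIcc 0 (1 - a),
      HasDerivAt (fun x => (log (x + a) - log (1 - x)) / (1 + a)) (1 / ((x + a) * (1 - x))) x := by
    intro x hx
    obtain ⟨hxa, hx1⟩ := hpos x hx
    have h := ((((hasDerivAt_id x).add_const a).log hxa.ne').sub
      (((hasDerivAt_id x).const_sub 1).log hx1.ne')).div_const (1 + a)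
    refine h.congr_deriv ?_
    simp only [id]
    field_simp
    ring
  have hcont : ContinuousOn (fun x => 1 / ((x + a) * (1 - x))) (uIcc 0 (1 - a)) :=
    continuousOn_const.div (by fun_prop) fun x hx => (mul_pos (hpos x hx).1 (hpos x hx).2).ne'
  rw [integral_eq_sub_of_hasDerivAt hderiv hcont.intervalIntegrable]
  simp
  field_simp
  ring

lemma integral_pow_mul_log (n : ℕ) (b : ℝ) :
    ∫ x in (0:ℝ)..b, x ^ n * log x =
      b ^ (n + 1) * log b / (n + 1) - b ^ (n + 1) / (n + 1) ^ 2 := by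
  have hn : (n : ℝ) + 1 ≠ 0 := by positivity
  let F : ℝ → ℝ := fun x => x ^ (n + 1) * log x / (n + 1) - x ^ (n + 1) / (n + 1) ^ 2
  -- continuous at `0` too, since `x * log x` is (with `log 0 = 0`)
  have hcont : Continuous F := by
    have hF : F = fun x => x ^ n * (x * log x) / (n + 1) - x ^ (n + 1) / (n + 1) ^ 2 := by
      funext x; simp only [F]; ring
    rw [hF]
    fun_prop
  have hderiv : ∀ x ≠ 0, HasDerivAt F (x ^ n * log x) x := by
    intro x hx
    have h := (((hasDerivAt_pow (n + 1) x).mul (hasDerivAt_log hx)).div_const ((n : ℝ) + 1)).sub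
      ((hasDerivAt_pow (n + 1) x).div_const (((n : ℝ) + 1) ^ 2))
    refine h.congr_deriv ?_
    simp only [Nat.add_sub_cancel]
    push_cast
    field_simp
    ring
  have hF : ∫ x in (0:ℝ)..b, x ^ n * log x = F b - F 0 := by
    refine integral_eq_sub_of_hasDeriv_right hcont.continuousOn
      (fun x hx => (hderiv x ?_).hasDerivWithinAt)
      (intervalIntegrable_log'.continuousOn_mul (continuousOn_pow n))
    rcases le_total 0 b with h | h
    · simp only [h, min_eq_left, max_eq_right, mem_Ioo] at hx; exact hx.1.ne'
    · simp only [h, min_eq_right, max_eq_left, mem_Ioo] at hx; exact hx.2.ne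
  simp [hF, F]

lemma hasSum_neg_one_pow_div_succ_sq :
    HasSum (fun n : ℕ => (-1 : ℝ) ^ n / ((n : ℝ) + 1) ^ 2) (π ^ 2 / 12) := by
  -- `∑ cos (π n) / n² = -π² / 12`, with `cos (π n) = (-1)ⁿ`
  have h := hasSum_one_div_nat_pow_mul_cos one_ne_zero (x := 1 / 2) (by norm_num)
  rw [← bernoulliFun, Nat.mul_one, bernoulliFun_two, ← hasSum_nat_add_iff' 1] at h
  have hterm (n : ℕ) : -(1 / ((n + 1 : ℕ) : ℝ) ^ 2 * cos (2 * π * (n + 1 : ℕ) * (1 / 2))) =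
      (-1) ^ n / ((n : ℝ) + 1) ^ 2 := by
    rw [show 2 * π * ((n + 1 : ℕ) : ℝ) * (1 / 2) = (n + 1 : ℕ) * π by ring, cos_nat_mul_pi,
      pow_succ]
    push_cast
    ring
  have h' := h.neg
  simp only [hterm] at h'
  norm_num at h'
  rwa [show (2 * π) ^ 2 / 2 / 2 * (1 / 12) = π ^ 2 / 12 by ring] at h'

lemma tsum_neg_one_pow_mul_pow_mul_log {x : ℝ} (hx0 : 0 < x) (hx1 : x ≤ 1) :
    ∑' n : ℕ, (-1) ^ n * (x ^ n * log x) = log x / (1 + x) := by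
  have hterm (n : ℕ) : (-1) ^ n * (x ^ n * log x) = (-x) ^ n * log x := by ring
  simp only [hterm]
  rw [tsum_mul_right]
  rcases hx1.lt_or_eq with hx1 | rfl
  · rw [tsum_geometric_of_norm_lt_one (by simpa [abs_of_pos hx0])]
    ring
  · simp

lemma integral_log_div_one_add : ∫ x in (0:ℝ)..1, log x / (1 + x) = -(π ^ 2 / 12) := by
  have hpow (n : ℕ) : ∫ x in (0:ℝ)..1, x ^ n * log x = -(1 / ((n : ℝ) + 1) ^ 2) := by
    simp [integral_pow_mul_log]
  let F : ℕ → ℝ → ℝ := fun n x => (-1) ^ n * (x ^ n * log x)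
  have hint (n : ℕ) : IntegrableOn (F n) (Ioc 0 1) :=
    ((intervalIntegrable_log'.continuousOn_mul (continuousOn_pow n)).const_mul _).1
  have hnorm (n : ℕ) : ∫ x in Ioc (0:ℝ) 1, ‖F n x‖ = 1 / ((n : ℝ) + 1) ^ 2 := by
    rw [setIntegral_congr_fun measurableSet_Ioc (g := fun x => -(x ^ n * log x)),
      MeasureTheory.integral_neg, ← integral_of_le zero_le_one, hpow, neg_neg]
    rintro x ⟨hx0, hx1⟩
    simp only [F]
    rw [norm_mul, norm_pow, norm_neg, norm_one, one_pow, one_mul]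
    exact norm_of_nonpos
      (mul_nonpos_of_nonneg_of_nonpos (by positivity) (log_nonpos hx0.le hx1))
  have hsummable : Summable fun n : ℕ => 1 / ((n : ℝ) + 1) ^ 2 := by
    exact_mod_cast (summable_nat_add_iff 1).mpr (summable_one_div_nat_pow.mpr one_lt_two)
  have h := hasSum_integral_of_summable_integral_norm hint (by simpa only [hnorm] using hsummable)
  rw [setIntegral_congr_fun measurableSet_Ioc
    fun x hx => tsum_neg_one_pow_mul_pow_mul_log hx.1 hx.2, ← integral_of_le zero_le_one] at h
  refine h.unique ?_
  convert hasSum_neg_one_pow_div_succ_sq.neg using 1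
  funext n
  rw [MeasureTheory.integral_const_mul, ← integral_of_le zero_le_one, hpow]
  ring

/-- Evaluation of the simplex integral `q₃`. -/
theorem stmt_11 :
    ∫ a₂ in (0:ℝ)..1, ∫ a₁ in (0:ℝ)..(1 - a₂),
        1 / ((a₁ + a₂) * (1 - a₁)) = Real.pi ^ 2 / 6 := by
  have hinner : ∀ a₂ ∈ uIoc (0:ℝ) 1,
      ∫ a₁ in (0:ℝ)..(1 - a₂), 1 / ((a₁ + a₂) * (1 - a₁)) = -2 * (log a₂ / (1 + a₂)) :=
    fun a₂ ha₂ => integral_one_div_add_mul_one_sub (by simpa using ha₂.1)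
  rw [integral_congr_ae (Filter.Eventually.of_forall hinner), intervalIntegral.integral_const_mul,
    integral_log_div_one_add]
  ring
end

section
/- Let n ≥ 4 be an integer. The function δ ↦ ∏_{i=2}^{n−2} (δ_i + δ_{i+1})^{−1} is Lebesgue-integrable over the open simplex {(δ_2, …, δ_{n−2}) ∈ (0,∞)^{n−3} : δ_2 + ⋯ + δ_{n−2} < 1}, where one sets δ_{n−1} := 1 − (δ_2 + ⋯ + δ_{n−2}). In particular, the disc volume V_disc(n) := ∫ over this simplex of ∏_{i=2}^{n−2}(δ_i + δ_{i+1})^{−1} dδ_2⋯dδ_{n−2} is finite. -/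
/-!
Weighted AM-GM bounds `(δ_k + δ_{k+1})⁻¹` by `δ_k^{(k+1)c-1} δ_{k+1}^{-(k+1)c}`; along the chain
the exponents telescope, so the integrand is dominated by the Dirichlet density
`∏ δ_k^{c-1} · δ_{n-1}^{-(n-3)c}`, whose exponents all exceed `-1` once `0 < c < 1/(n-3)`. That
density is integrable over the simplex: integrating out the first coordinate over `(0, L)`, with
`L = 1 - ∑` of the others, gives a Beta integral equal to `B · L^{a+b+1}`, and the remaining
integral is again of Dirichlet type in one variable fewer.
-/

open MeasureTheory

/-- Extension of the disc simplex coordinates: for `2 ≤ i ≤ n-2` this is `δ_i`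
(the `(i-2)`-th component of `δ`), and `δ_{n-1} := 1 - (δ_2 + ⋯ + δ_{n-2})`. -/
noncomputable def discδ (n : ℕ) (δ : Fin (n - 3) → ℝ) (i : ℕ) : ℝ :=
  if h : n - 3 = 0 then 0
  else if i = n - 1 then 1 - ∑ j, δ j
  else δ ⟨(i - 2) % (n - 3), Nat.mod_lt _ (Nat.pos_of_ne_zero h)⟩

open Set
open scoped ENNReal

theorem Real.inv_add_le_rpow_mul_rpow {x y s : ℝ} (hx : 0 < x) (hy : 0 < y) (hs₀ : 0 ≤ s)
    (hs₁ : s ≤ 1) : (x + y)⁻¹ ≤ x ^ (s - 1) * y ^ (-s) := by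
  have hgm : x ^ (1 - s) * y ^ s ≤ (1 - s) * x + s * y :=
    Real.geom_mean_le_arith_mean2_weighted (by linarith) hs₀ hx.le hy.le (by ring)
  calc (x + y)⁻¹ ≤ (x ^ (1 - s) * y ^ s)⁻¹ := inv_anti₀ (by positivity) (hgm.trans (by nlinarith))
    _ = x ^ (s - 1) * y ^ (-s) := by
        rw [mul_inv, ← Real.rpow_neg hx.le, ← Real.rpow_neg hy.le, neg_sub]

theorem prod_range_inv_add_succ_le {e : ℕ → ℝ} {c : ℝ} {t : ℕ} (he : ∀ k ≤ t, 0 < e k)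
    (hc : 0 ≤ c) (htc : t * c ≤ 1) :
    ∏ k ∈ Finset.range t, (e k + e (k + 1))⁻¹ ≤
      (∏ k ∈ Finset.range t, e k ^ (c - 1)) * e t ^ (-(t * c)) := by
  induction t with
  | zero => simp
  | succ t ih =>
    push_cast at htc ⊢
    have ih := ih (fun k hk => he k (by omega)) (by nlinarith)
    have hamgm := Real.inv_add_le_rpow_mul_rpow (he t (by omega)) (he (t + 1) le_rfl)
      (s := (t + 1) * c) (by positivity) htc
    rw [Finset.prod_range_succ, Finset.prod_range_succ]
    calc (∏ k ∈ Finset.range t, (e k + e (k + 1))⁻¹) * (e t + e (t + 1))⁻¹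
        ≤ ((∏ k ∈ Finset.range t, e k ^ (c - 1)) * e t ^ (-(t * c))) *
            (e t ^ ((t + 1) * c - 1) * e (t + 1) ^ (-((t + 1) * c))) := by
          refine mul_le_mul ih hamgm (inv_nonneg.2 ?_) (mul_nonneg ?_ ?_)
          · linarith [he t (by omega), he (t + 1) le_rfl]
          · exact Finset.prod_nonneg fun k hk =>
              Real.rpow_nonneg (he k (by have := Finset.mem_range.1 hk; omega)).le _
          · exact Real.rpow_nonneg (he t (by omega)).le _
      _ = (∏ k ∈ Finset.range t, e k ^ (c - 1)) * e t ^ (c - 1) *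
            e (t + 1) ^ (-((t + 1) * c)) := by
          rw [show c - 1 = -(t * c) + ((t + 1) * c - 1) by ring,
            Real.rpow_add (he t (by omega))]
          ring

theorem lintegral_Ioo_rpow_mul_one_sub_rpow_lt_top {a b : ℝ} (ha : -1 < a) (hb : -1 < b) :
    ∫⁻ t in Ioo 0 1, ENNReal.ofReal (t ^ a * (1 - t) ^ b) < ∞ := by
  have hleft : IntervalIntegrable (fun t : ℝ => t ^ a * (1 - t) ^ b) volume 0 (1 / 2) := by
    refine (intervalIntegral.intervalIntegrable_rpow' ha).mul_continuousOn
      (ContinuousOn.rpow_const (by fun_prop) fun t ht => Or.inl ?_)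
    rw [uIcc_of_le (by norm_num)] at ht
    linarith [ht.2]
  have hright : IntervalIntegrable (fun t : ℝ => t ^ a * (1 - t) ^ b) volume (1 / 2) 1 := by
    have h := (intervalIntegral.intervalIntegrable_rpow' hb (a := 0) (b := 1 / 2)).comp_sub_left 1
    norm_num at h
    refine h.symm.continuousOn_mul
      (ContinuousOn.rpow_const (by fun_prop) fun t ht => Or.inl ?_)
    rw [uIcc_of_le (by norm_num)] at ht
    linarith [ht.1]
  have hint := (intervalIntegrable_iff_integrableOn_Ioc_of_le zero_le_one).1 (hleft.trans hright)
  exact (hint.mono_set Ioo_subset_Ioc_self).lintegral_lt_top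

theorem lintegral_Ioo_rpow_mul_sub_rpow {a b L : ℝ} (hL : 0 < L) :
    ∫⁻ x in Ioo 0 L, ENNReal.ofReal (x ^ a * (L - x) ^ b) =
      ENNReal.ofReal (L ^ (a + b + 1)) * ∫⁻ t in Ioo 0 1, ENNReal.ofReal (t ^ a * (1 - t) ^ b) := by
  have himage : (fun t => L * t) '' Ioo 0 1 = Ioo 0 L := by
    rw [image_mul_left_Ioo hL, mul_zero, mul_one]
  rw [← himage, lintegral_image_eq_lintegral_abs_deriv_mul (f' := fun _ => L) measurableSet_Ioo
    (fun t _ => by simpa using ((hasDerivAt_id t).const_mul L).hasDerivWithinAt)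
    (mul_right_injective₀ hL.ne').injOn, ← lintegral_const_mul' _ _ ENNReal.ofReal_ne_top]
  refine setLIntegral_congr_fun measurableSet_Ioo fun t ht => ?_
  rw [abs_of_pos hL, ← ENNReal.ofReal_mul hL.le, ← ENNReal.ofReal_mul (by positivity)]
  congr 1
  rw [show L - L * t = L * (1 - t) by ring, Real.mul_rpow hL.le ht.1.le,
    Real.mul_rpow hL.le (by linarith [ht.2]), Real.rpow_add hL, Real.rpow_add hL, Real.rpow_one]
  ring

def openSimplex (m : ℕ) : Set (Fin m → ℝ) := {δ | (∀ i, 0 < δ i) ∧ ∑ i, δ i < 1}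

theorem measurableSet_openSimplex (m : ℕ) : MeasurableSet (openSimplex m) := by
  unfold openSimplex
  measurability

theorem cons_mem_openSimplex_iff {m : ℕ} {x : ℝ} {y : Fin m → ℝ} :
    Fin.cons x y ∈ openSimplex (m + 1) ↔ y ∈ openSimplex m ∧ x ∈ Ioo 0 (1 - ∑ i, y i) := by
  simp only [openSimplex, mem_ofPred_eq, Fin.forall_fin_succ, Fin.cons_zero, Fin.cons_succ,
    Fin.sum_cons, mem_Ioo]
  constructor
  · rintro ⟨⟨hx, hy⟩, hsum⟩
    exact ⟨⟨hy, by linarith [hx]⟩, hx, by linarith⟩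
  · rintro ⟨⟨hy, -⟩, hx, hsum⟩
    exact ⟨⟨hx, hy⟩, by linarith⟩

theorem lintegral_openSimplex_succ {m : ℕ} {f : (Fin (m + 1) → ℝ) → ℝ≥0∞} (hf : Measurable f) :
    ∫⁻ δ in openSimplex (m + 1), f δ =
      ∫⁻ y in openSimplex m, ∫⁻ x in Ioo 0 (1 - ∑ i, y i), f (Fin.cons x y) := by
  have hind := hf.indicator (measurableSet_openSimplex (m + 1))
  rw [← lintegral_indicator (measurableSet_openSimplex (m + 1)), volume_pi,
    ← ((measurePreserving_piFinSuccAbove (fun _ => volume) 0).symm).lintegral_comp hind,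
    lintegral_prod_symm' (fun z => (openSimplex (m + 1)).indicator f
      ((MeasurableEquiv.piFinSuccAbove (fun _ => ℝ) 0).symm z))
      (hind.comp (MeasurableEquiv.measurable _)),
    ← lintegral_indicator (measurableSet_openSimplex m)]
  refine lintegral_congr fun y => ?_
  have hcons : ∀ x, (MeasurableEquiv.piFinSuccAbove (fun _ => ℝ) 0).symm (x, y) = Fin.cons x y :=
    fun x => by rw [MeasurableEquiv.piFinSuccAbove_symm_apply, Fin.insertNthEquiv_zero]; rfl
  simp only [hcons]
  by_cases hy : y ∈ openSimplex m
  · rw [indicator_of_mem hy, ← lintegral_indicator measurableSet_Ioo]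
    refine lintegral_congr fun x => ?_
    by_cases hx : x ∈ Ioo 0 (1 - ∑ i, y i)
    · rw [indicator_of_mem hx, indicator_of_mem (cons_mem_openSimplex_iff.2 ⟨hy, hx⟩)]
    · rw [indicator_of_notMem hx,
        indicator_of_notMem fun h => hx (cons_mem_openSimplex_iff.1 h).2]
  · have hzero : ∀ x, (openSimplex (m + 1)).indicator f (Fin.cons x y) = 0 :=
      fun x => indicator_of_notMem (fun h => hy (cons_mem_openSimplex_iff.1 h).1) _
    simp only [hzero, lintegral_zero, indicator_of_notMem hy]

theorem lintegral_openSimplex_prod_rpow_lt_top (m : ℕ) {a b : ℝ} (ha : -1 < a) (hb : -1 < b) :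
    ∫⁻ δ in openSimplex m, ENNReal.ofReal ((∏ i, δ i ^ a) * (1 - ∑ i, δ i) ^ b) < ∞ := by
  induction m generalizing b with
  | zero => simp
  | succ m ih =>
    set B := ∫⁻ t in Ioo 0 1, ENNReal.ofReal (t ^ a * (1 - t) ^ b)
    rw [lintegral_openSimplex_succ (by fun_prop)]
    calc _ = ∫⁻ y in openSimplex m,
          B * ENNReal.ofReal ((∏ i, y i ^ a) * (1 - ∑ i, y i) ^ (a + b + 1)) := by
          refine setLIntegral_congr_fun (measurableSet_openSimplex m) fun y hy => ?_
          have hL : 0 < 1 - ∑ i, y i := by linarith [hy.2]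
          have hP : 0 ≤ ∏ i, y i ^ a := Finset.prod_nonneg fun i _ => by have := hy.1 i; positivity
          have hsplit : ∀ x : ℝ,
              ENNReal.ofReal ((x ^ a * ∏ i, y i ^ a) * (1 - (x + ∑ i, y i)) ^ b) =
                ENNReal.ofReal (∏ i, y i ^ a) * ENNReal.ofReal (x ^ a * (1 - ∑ i, y i - x) ^ b) := by
            intro x
            rw [← ENNReal.ofReal_mul hP, sub_add_eq_sub_sub_swap]
            ring_nf
          simp only [Fin.prod_univ_succ, Fin.cons_zero, Fin.cons_succ, Fin.sum_cons, hsplit]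
          rw [lintegral_const_mul' _ _ ENNReal.ofReal_ne_top, lintegral_Ioo_rpow_mul_sub_rpow hL,
            ENNReal.ofReal_mul hP]
          ring
      _ < ∞ := by
          rw [lintegral_const_mul' _ _ (lintegral_Ioo_rpow_mul_one_sub_rpow_lt_top ha hb).ne]
          exact ENNReal.mul_lt_top (lintegral_Ioo_rpow_mul_one_sub_rpow_lt_top ha hb)
            (ih (by linarith))

theorem integrableOn_openSimplex_prod_rpow (m : ℕ) {a b : ℝ} (ha : -1 < a) (hb : -1 < b) :
    IntegrableOn (fun δ => (∏ i, δ i ^ a) * (1 - ∑ i, δ i) ^ b) (openSimplex m) := by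
  refine ⟨by fun_prop, ?_⟩
  rw [hasFiniteIntegral_iff_ofReal (ae_restrict_of_forall_mem (measurableSet_openSimplex m)
    fun δ hδ => ?_)]
  · exact lintegral_openSimplex_prod_rpow_lt_top m ha hb
  · exact mul_nonneg (Finset.prod_nonneg fun i _ => Real.rpow_nonneg (hδ.1 i).le _)
      (Real.rpow_nonneg (by linarith [hδ.2]) _)

theorem discδ_two_add {n : ℕ} (hn : n - 3 ≠ 0) (δ : Fin (n - 3) → ℝ) (k : Fin (n - 3)) :
    discδ n δ (2 + k) = δ k := by
  rw [discδ, dif_neg hn, if_neg (by omega)]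
  congr
  simp [Nat.mod_eq_of_lt k.isLt]

theorem discδ_sub_one {n : ℕ} (hn : n - 3 ≠ 0) (δ : Fin (n - 3) → ℝ) :
    discδ n δ (n - 1) = 1 - ∑ j, δ j := by
  rw [discδ, dif_neg hn, if_pos rfl]

theorem measurable_discδ (n i : ℕ) : Measurable fun δ : Fin (n - 3) → ℝ => discδ n δ i := by
  unfold discδ
  split_ifs <;> fun_prop

theorem norm_prod_discδ_le {n : ℕ} (hn : 4 ≤ n) {c : ℝ} (hc : 0 ≤ c) (hnc : (n - 3 : ℕ) * c ≤ 1)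
    {δ : Fin (n - 3) → ℝ} (hδ : δ ∈ openSimplex (n - 3)) :
    ‖∏ i ∈ Finset.Icc 2 (n - 2), (discδ n δ i + discδ n δ (i + 1))⁻¹‖ ≤
      (∏ k, δ k ^ (c - 1)) * (1 - ∑ k, δ k) ^ (-((n - 3 : ℕ) * c)) := by
  have hm : n - 3 ≠ 0 := by omega
  set e : ℕ → ℝ := fun k => discδ n δ (2 + k)
  have he_lt : ∀ k (hk : k < n - 3), e k = δ ⟨k, hk⟩ := fun k hk => discδ_two_add hm δ ⟨k, hk⟩
  have he_last : e (n - 3) = 1 - ∑ k, δ k := by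
    simp only [e, show 2 + (n - 3) = n - 1 by omega, discδ_sub_one hm]
  have he_pos : ∀ k ≤ n - 3, 0 < e k := by
    intro k hk
    rcases hk.lt_or_eq with hk | rfl
    · rw [he_lt k hk]
      exact hδ.1 _
    · rw [he_last]
      linarith [hδ.2]
  have hreindex : ∏ i ∈ Finset.Icc 2 (n - 2), (discδ n δ i + discδ n δ (i + 1))⁻¹ =
      ∏ k ∈ Finset.range (n - 3), (e k + e (k + 1))⁻¹ := by
    rw [← Finset.Ico_add_one_right_eq_Icc, Finset.prod_Ico_eq_prod_range,
      show n - 2 + 1 - 2 = n - 3 by omega]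
    rfl
  rw [hreindex, Real.norm_of_nonneg (Finset.prod_nonneg fun k hk => inv_nonneg.2 (add_pos
    (he_pos k (by have := Finset.mem_range.1 hk; omega))
    (he_pos (k + 1) (by have := Finset.mem_range.1 hk; omega))).le)]
  calc _ ≤ (∏ k ∈ Finset.range (n - 3), e k ^ (c - 1)) * e (n - 3) ^ (-((n - 3 : ℕ) * c)) :=
        prod_range_inv_add_succ_le he_pos hc hnc
    _ = _ := by
        rw [he_last, ← Fin.prod_univ_eq_prod_range]
        congr 1
        exact Finset.prod_congr rfl fun k _ => by rw [he_lt k k.isLt]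

/-- The integrand of the disc volume `V_disc(n)` is Lebesgue-integrable over the
open simplex `{δ ∈ (0,∞)^{n-3} : δ_2 + ⋯ + δ_{n-2} < 1}`; in particular the
disc volume is finite. -/
theorem stmt_13 (n : ℕ) (hn : 4 ≤ n) :
    IntegrableOn
      (fun δ : Fin (n - 3) → ℝ =>
        ∏ i ∈ Finset.Icc 2 (n - 2), (discδ n δ i + discδ n δ (i + 1))⁻¹)
      {δ : Fin (n - 3) → ℝ | (∀ i, 0 < δ i) ∧ ∑ i, δ i < 1} := by
  set c : ℝ := 1 / ((n - 3 : ℕ) + 1)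
  have hc : 0 < c := by positivity
  have hnc : (n - 3 : ℕ) * c < 1 := by
    rw [mul_one_div, div_lt_one (by positivity)]
    linarith
  refine Integrable.mono' (integrableOn_openSimplex_prod_rpow (n - 3)
    (a := c - 1) (b := -((n - 3 : ℕ) * c)) (by linarith) (by linarith)) ?_
    (ae_restrict_of_forall_mem (measurableSet_openSimplex _)
      fun δ hδ => norm_prod_discδ_le hn hc.le hnc.le hδ)
  exact (Finset.measurable_prod _ fun i _ =>
    ((measurable_discδ n i).add (measurable_discδ n (i + 1))).inv).aestronglyMeasurable
end

section
/- ∫ over the region {(z_2, z_3, z_4) ∈ ℝ³ : 0 < z_2 < z_3 < z_4 < 1} of 1/( z_3·(1 − z_3)·(z_4 − z_2) ) dz_2 dz_3 dz_4 = π²/3. -/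
open MeasureTheory Set Real
open scoped ENNReal

/-!
The integrand is nonnegative, so by Tonelli the integral is an iterated one. Integrating out
`z₂` gives `(log z₄ - log (z₄ - z₃)) / (z₃ (1 - z₃))`, and then integrating out `z₄` gives
`H(z₃) / (z₃ (1 - z₃))`, with `H` the binary entropy. Since
`H(t) / (t (1 - t)) = φ t + φ (1 - t)` for `φ t = -log (1 - t) / t = ∑ tⁿ / (n + 1)`,
the last integral is `2 ∫₀¹ φ = 2 ∑ 1 / (n + 1)² = 2 ζ(2) = π² / 3`.
-/

theorem setLIntegral_Ioo_ofReal_deriv_eq_sub {f f' : ℝ → ℝ} {a b : ℝ} (hab : a ≤ b)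
    (hcont : ContinuousOn f (Icc a b)) (hderiv : ∀ x ∈ Ioo a b, HasDerivAt f (f' x) x)
    (hf' : ∀ x ∈ Ioo a b, 0 ≤ f' x) :
    ∫⁻ x in Ioo a b, ENNReal.ofReal (f' x) = ENNReal.ofReal (f b - f a) := by
  have hint : IntegrableOn f' (Ioo a b) :=
    (intervalIntegral.integrableOn_deriv_of_nonneg hcont hderiv hf').mono_set Ioo_subset_Ioc_self
  rw [← ofReal_integral_eq_lintegral_ofReal hint (ae_restrict_of_forall_mem measurableSet_Ioo hf'),
    ← integral_Ioc_eq_integral_Ioo, ← intervalIntegral.integral_of_le hab,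
    intervalIntegral.integral_eq_sub_of_hasDerivAt_of_le hab hcont hderiv
      ((intervalIntegrable_iff_integrableOn_Ioo_of_le hab).mpr hint)]

theorem setLIntegral_Ioo_comp_const_sub (g : ℝ → ℝ≥0∞) (a b c : ℝ) :
    ∫⁻ x in Ioo (c - b) (c - a), g (c - x) = ∫⁻ x in Ioo a b, g x := by
  rw [← preimage_const_sub_Ioo]
  exact (Measure.measurePreserving_sub_left volume c).setLIntegral_comp_preimage_emb
    (measurableEmbedding_subLeft c) g _

theorem setLIntegral_increasing_triples_eq_iterated {g : ℝ × ℝ × ℝ → ℝ≥0∞} (hg : Measurable g)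
    (a b : ℝ) :
    ∫⁻ z in {z : ℝ × ℝ × ℝ | a < z.1 ∧ z.1 < z.2.1 ∧ z.2.1 < z.2.2 ∧ z.2.2 < b}, g z =
      ∫⁻ y in Ioo a b, ∫⁻ w in Ioo y b, ∫⁻ x in Ioo a y, g (x, y, w) := by
  set S := {z : ℝ × ℝ × ℝ | a < z.1 ∧ z.1 < z.2.1 ∧ z.2.1 < z.2.2 ∧ z.2.2 < b}
  have hS : MeasurableSet S := by unfold S; measurability
  rw [← lintegral_indicator hS, Measure.volume_eq_prod,
    lintegral_prod_symm _ (hg.indicator hS).aemeasurable, Measure.volume_eq_prod,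
    lintegral_prod _ (hg.indicator hS).lintegral_prod_left'.aemeasurable,
    ← lintegral_indicator measurableSet_Ioo]
  refine lintegral_congr fun y => ?_
  by_cases hy : y ∈ Ioo a b
  · rw [indicator_of_mem hy, ← lintegral_indicator measurableSet_Ioo]
    refine lintegral_congr fun w => ?_
    by_cases hw : w ∈ Ioo y b
    · rw [indicator_of_mem hw, ← lintegral_indicator measurableSet_Ioo]
      simp [S, indicator_apply, hw.1, hw.2]
    · have hout : ∀ x, (x, y, w) ∉ S := fun x hx => hw ⟨hx.2.2.1, hx.2.2.2⟩
      simp [indicator_of_notMem hw, indicator_of_notMem (hout _)]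
  · have hout : ∀ x w, (x, y, w) ∉ S := fun x w hx =>
      hy ⟨hx.1.trans hx.2.1, hx.2.2.1.trans hx.2.2.2⟩
    simp [indicator_of_notMem hy, indicator_of_notMem (hout _ _)]

theorem setLIntegral_Ioo_ofReal_one_div_sub {a b w : ℝ} (hab : a ≤ b) (hbw : b < w) :
    ∫⁻ x in Ioo a b, ENNReal.ofReal (1 / (w - x)) =
      ENNReal.ofReal (log (w - a) - log (w - b)) := by
  rw [← neg_sub_neg]
  refine setLIntegral_Ioo_ofReal_deriv_eq_sub (f := fun x => -log (w - x)) hab ?_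
    (fun x hx => ?_) (fun x hx => ?_)
  · refine (continuousOn_log.comp (by fun_prop) fun x hx => ?_).neg
    exact (sub_pos.mpr (hx.2.trans_lt hbw)).ne'
  · have hwx : 0 < w - x := by linarith [hx.2]
    refine (((hasDerivAt_id x).const_sub w).log hwx.ne').neg.congr_deriv ?_
    simp only [id, neg_div, neg_neg]
  · have hwx : 0 < w - x := by linarith [hx.2]
    positivity

theorem setLIntegral_Ioo_ofReal_log_sub_log_sub {y : ℝ} (hy₀ : 0 ≤ y) (hy₁ : y ≤ 1) :
    ∫⁻ w in Ioo y 1, ENNReal.ofReal (log w - log (w - y)) = ENNReal.ofReal (binEntropy y) := by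
  have hFTC := setLIntegral_Ioo_ofReal_deriv_eq_sub
    (f := fun w => negMulLog (w - y) - negMulLog w) (f' := fun w => log w - log (w - y)) hy₁
    (by fun_prop) (fun w hw => ?_) (fun w hw => ?_)
  · simpa [binEntropy_eq_negMulLog_add_negMulLog_one_sub, add_comm] using hFTC
  · have hwy : 0 < w - y := by linarith [hw.1]
    refine (((hasDerivAt_negMulLog hwy.ne').comp w ((hasDerivAt_id w).sub_const y)).sub
      (hasDerivAt_negMulLog (hwy.trans_le (by linarith)).ne')).congr_deriv ?_
    ring
  · have hwy : 0 < w - y := by linarith [hw.1]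
    exact sub_nonneg.mpr (log_le_log hwy (by linarith))

theorem hasSum_one_div_nat_add_one_sq :
    HasSum (fun n : ℕ => 1 / ((n : ℝ) + 1) ^ 2) (π ^ 2 / 6) := by
  simpa using (hasSum_nat_add_iff' 1).mpr hasSum_zeta_two

theorem hasSum_pow_div_nat_add_one {x : ℝ} (hx₀ : 0 < x) (hx₁ : x < 1) :
    HasSum (fun n : ℕ => x ^ n / (n + 1)) (-log (1 - x) / x) := by
  have hx : |x| < 1 := abs_lt.mpr ⟨by linarith, hx₁⟩
  refine ((hasSum_pow_div_log_of_abs_lt_one hx).div_const x).congr_fun fun n => ?_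
  field_simp
  ring

theorem setLIntegral_Ioo_zero_one_ofReal_neg_log_one_sub_div :
    ∫⁻ x in Ioo 0 1, ENNReal.ofReal (-log (1 - x) / x) = ENNReal.ofReal (π ^ 2 / 6) := by
  have hseries : ∀ x ∈ Ioo (0 : ℝ) 1,
      ENNReal.ofReal (-log (1 - x) / x) = ∑' n : ℕ, ENNReal.ofReal (x ^ n / (n + 1)) := by
    intro x hx
    have hs := hasSum_pow_div_nat_add_one hx.1 hx.2
    rw [← hs.tsum_eq, ENNReal.ofReal_tsum_of_nonneg (fun n => by have := hx.1; positivity)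
      hs.summable]
  have hterm : ∀ n : ℕ, ∫⁻ x in Ioo 0 1, ENNReal.ofReal (x ^ n / (n + 1)) =
      ENNReal.ofReal (1 / ((n : ℝ) + 1) ^ 2) := by
    intro n
    have := setLIntegral_Ioo_ofReal_deriv_eq_sub (f := fun x => x ^ (n + 1) / ((n : ℝ) + 1) ^ 2)
      (f' := fun x => x ^ n / (n + 1)) zero_le_one (by fun_prop) (fun x _ => ?_)
      (fun x hx => by have := hx.1; positivity)
    · simpa using this
    · refine ((hasDerivAt_pow (n + 1) x).div_const _).congr_deriv ?_
      field_simp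
      push_cast
      ring
  rw [setLIntegral_congr_fun measurableSet_Ioo hseries, lintegral_tsum (fun n => by fun_prop)]
  simp_rw [hterm]
  rw [← ENNReal.ofReal_tsum_of_nonneg (fun n => by positivity)
    hasSum_one_div_nat_add_one_sq.summable, hasSum_one_div_nat_add_one_sq.tsum_eq]

theorem binEntropy_div_mul_one_sub_eq {y : ℝ} (hy₀ : 0 < y) (hy₁ : y < 1) :
    binEntropy y / (y * (1 - y)) = -log (1 - y) / y + -log (1 - (1 - y)) / (1 - y) := by
  have : 0 < 1 - y := by linarith
  rw [binEntropy, log_inv, log_inv, sub_sub_cancel]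
  field_simp
  ring

theorem setLIntegral_Ioo_zero_one_ofReal_binEntropy_div :
    ∫⁻ y in Ioo 0 1, ENNReal.ofReal (binEntropy y / (y * (1 - y))) =
      ENNReal.ofReal (π ^ 2 / 3) := by
  set φ : ℝ → ℝ := fun x => -log (1 - x) / x
  have hφ_nonneg : ∀ x ∈ Ioo (0 : ℝ) 1, 0 ≤ φ x := fun x hx =>
    div_nonneg (neg_nonneg.mpr (log_nonpos (by linarith [hx.2]) (by linarith [hx.1]))) hx.1.le
  have hsplit : ∀ y ∈ Ioo (0 : ℝ) 1, ENNReal.ofReal (binEntropy y / (y * (1 - y))) =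
      ENNReal.ofReal (φ y) + ENNReal.ofReal (φ (1 - y)) := fun y hy => by
    rw [binEntropy_div_mul_one_sub_eq hy.1 hy.2, ENNReal.ofReal_add (hφ_nonneg y hy)
      (hφ_nonneg (1 - y) ⟨by linarith [hy.2], by linarith [hy.1]⟩)]
  have hreflect := setLIntegral_Ioo_comp_const_sub (fun x => ENNReal.ofReal (φ x)) 0 1 1
  norm_num at hreflect
  rw [setLIntegral_congr_fun measurableSet_Ioo hsplit, lintegral_add_left (by fun_prop), hreflect,
    setLIntegral_Ioo_zero_one_ofReal_neg_log_one_sub_div, ← ENNReal.ofReal_add (by positivity)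
    (by positivity)]
  ring_nf

theorem setLIntegral_Ioo_setLIntegral_Ioo_eq_binEntropy_div {y : ℝ} (hy₀ : 0 < y)
    (hy₁ : y < 1) :
    ∫⁻ w in Ioo y 1, ∫⁻ x in Ioo 0 y, ENNReal.ofReal (1 / (y * (1 - y) * (w - x))) =
      ENNReal.ofReal (binEntropy y / (y * (1 - y))) := by
  have hc : 0 ≤ 1 / (y * (1 - y)) := by
    have : 0 < 1 - y := by linarith
    positivity
  calc _ = ∫⁻ w in Ioo y 1,
        ENNReal.ofReal (1 / (y * (1 - y))) * ENNReal.ofReal (log w - log (w - y)) := by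
        refine setLIntegral_congr_fun measurableSet_Ioo fun w hw => ?_
        have hsplit : ∀ x, 1 / (y * (1 - y) * (w - x)) = 1 / (y * (1 - y)) * (1 / (w - x)) :=
          fun x => (one_div_mul_one_div _ _).symm
        simp_rw [hsplit, ENNReal.ofReal_mul hc]
        rw [lintegral_const_mul' _ _ ENNReal.ofReal_ne_top,
          setLIntegral_Ioo_ofReal_one_div_sub hy₀.le hw.1, sub_zero]
    _ = ENNReal.ofReal (1 / (y * (1 - y))) * ENNReal.ofReal (binEntropy y) := by
        rw [lintegral_const_mul' _ _ ENNReal.ofReal_ne_top,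
          setLIntegral_Ioo_ofReal_log_sub_log_sub hy₀.le hy₁.le]
    _ = _ := by rw [← ENNReal.ofReal_mul hc, one_div_mul_eq_div]

/-- The disc volume `V_disc(6)` equals `π²/3`. -/
theorem stmt_15 :
    ∫ z in {z : ℝ × ℝ × ℝ |
        0 < z.1 ∧ z.1 < z.2.1 ∧ z.2.1 < z.2.2 ∧ z.2.2 < 1},
      1 / (z.2.1 * (1 - z.2.1) * (z.2.2 - z.1)) = Real.pi ^ 2 / 3 := by
  rw [integral_eq_lintegral_of_nonneg_ae
      (ae_restrict_of_forall_mem (by measurability) fun z hz => ?_)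
      (Measurable.aestronglyMeasurable (by fun_prop)),
    setLIntegral_increasing_triples_eq_iterated (by fun_prop) 0 1,
    setLIntegral_congr_fun measurableSet_Ioo fun y hy =>
      setLIntegral_Ioo_setLIntegral_Ioo_eq_binEntropy_div hy.1 hy.2,
    setLIntegral_Ioo_zero_one_ofReal_binEntropy_div, ENNReal.toReal_ofReal (by positivity)]
  obtain ⟨h₁, h₂, h₃, h₄⟩ := hz
  have : 0 < 1 - z.2.1 := by linarith
  have : 0 < z.2.2 - z.1 := by linarith
  have := h₁.trans h₂
  positivity
end

section
/- Let f : ℝ → ℝ be four times continuously differentiable on a neighborhood of a point t, with f'(t) > 0. Then, as ε → 0⁺, log( e^{f(t+ε) − f(t−ε)} − 1 ) − log(2ε) − log(f'(t)) − ε·f'(t) − (ε²/6)·( f'''(t)/f'(t) + f'(t)² ) = O(ε³). -/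
open Asymptotics Filter Topology Finset
open scoped Nat

/-!
Write `a = f'(t)` and `b = f'''(t)`. Taylor's theorem gives
`u(ε) := f(t + ε) - f(t - ε) = 2aε + bε³/3 + O(ε⁴)`, the even-order terms cancelling.
Since `exp` is strictly differentiable, `e^u` may be replaced by `e^(2aε + bε³/3)` at the cost of
`O(u - (2aε + bε³/3)) = O(ε⁴)`, and comparing Taylor polynomials of `exp` then shows
`e^u - 1 = 2aε · e^(P(ε)) + O(ε⁴)` with `P(ε) = aε + (ε²/6)(b/a + a²)`.
Dividing by `2aε` gives `(e^u - 1)/(2aε) = e^(P(ε)) + O(ε³)`, and strict differentiability of `log`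
at `1` turns this into `log((e^u - 1)/(2aε)) = P(ε) + O(ε³)`.
-/

theorem taylor_isBigO {E : Type*} [NormedAddCommGroup E] [NormedSpace ℝ E]
    {f : ℝ → E} {x₀ : ℝ} {n : ℕ} {s : Set ℝ}
    (hs : Convex ℝ s) (hx₀s : x₀ ∈ s) (hf : ContDiffOn ℝ (n + 1) f s) :
    (fun x ↦ f x - taylorWithinEval f n s x₀ x) =O[𝓝[s] x₀] fun x ↦ (x - x₀) ^ (n + 1) := by
  have hnext : (fun x ↦ (((n + 1 : ℝ) * n !)⁻¹ * (x - x₀) ^ (n + 1)) •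
      iteratedDerivWithin (n + 1) f s x₀) =O[𝓝[s] x₀] fun x ↦ (x - x₀) ^ (n + 1) := by
    refine .of_bound (((n + 1 : ℝ) * n !)⁻¹ * ‖iteratedDerivWithin (n + 1) f s x₀‖) ?_
    filter_upwards with x
    rw [norm_smul, norm_mul, norm_inv, Real.norm_of_nonneg (by positivity)]
    exact le_of_eq (by ring)
  have hlittle := (taylor_isLittleO hs hx₀s (n := n + 1) (by exact_mod_cast hf)).isBigO
  refine (hlittle.add hnext).congr_left fun x ↦ ?_
  rw [taylorWithinEval_succ]
  abel

theorem ContDiffAt.isBigO_sub_taylor {E : Type*} [NormedAddCommGroup E] [NormedSpace ℝ E]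
    {f : ℝ → E} {x₀ : ℝ} {n : ℕ} (hf : ContDiffAt ℝ (n + 1) f x₀) :
    (fun h ↦ f (x₀ + h) - ∑ k ∈ range (n + 1), ((k ! : ℝ)⁻¹ * h ^ k) • iteratedDeriv k f x₀)
      =O[𝓝 0] fun h ↦ h ^ (n + 1) := by
  obtain ⟨u, hu, hfu⟩ := hf.contDiffOn le_rfl (by simp)
  obtain ⟨r, hr, hball⟩ := Metric.mem_nhds_iff.1 hu
  have hx₀ : x₀ ∈ Metric.ball x₀ r := Metric.mem_ball_self hr
  have htaylor := taylor_isBigO (convex_ball x₀ r) hx₀ (hfu.mono hball)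
  rw [Metric.isOpen_ball.nhdsWithin_eq hx₀] at htaylor
  have hshift : Tendsto (fun h : ℝ ↦ x₀ + h) (𝓝 0) (𝓝 x₀) := by
    simpa using tendsto_const_nhds.add (tendsto_id (x := 𝓝 (0 : ℝ)))
  refine (htaylor.comp_tendsto hshift).congr (fun h ↦ ?_) (fun h ↦ by simp)
  simp only [Function.comp_apply, taylor_within_apply, add_sub_cancel_left,
    iteratedDerivWithin_of_isOpen Metric.isOpen_ball hx₀]

theorem HasStrictDerivAt.isBigO_comp_sub_comp {α : Type*} {l : Filter α} {g : ℝ → ℝ} {g' x : ℝ}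
    (hg : HasStrictDerivAt g g' x) {u v : α → ℝ} (hu : Tendsto u l (𝓝 x))
    (hv : Tendsto v l (𝓝 x)) :
    (fun a ↦ g (u a) - g (v a)) =O[l] fun a ↦ u a - v a :=
  hg.hasStrictFDerivAt.isBigO_sub.comp_tendsto (hu.prodMk_nhds hv)

theorem isBigO_pow_of_eq_pow_mul {R q : ℝ → ℝ} {n : ℕ} (hq : ContinuousAt q 0)
    (h : ∀ ε, R ε = ε ^ n * q ε) : R =O[𝓝 0] fun ε ↦ ε ^ n :=
  ((isBigO_refl (fun ε : ℝ ↦ ε ^ n) _).mul (hq.tendsto.isBigO_one ℝ)).congr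
    (fun ε ↦ (h ε).symm) (fun _ ↦ mul_one _)

theorem ContDiffAt.centralDifference_sub_isBigO {f : ℝ → ℝ} {t : ℝ} (hf : ContDiffAt ℝ 4 f t) :
    (fun ε ↦ f (t + ε) - f (t - ε) - (2 * deriv f t * ε + iteratedDeriv 3 f t / 3 * ε ^ 3))
      =O[𝓝 0] fun ε ↦ ε ^ 4 := by
  have htaylor := hf.isBigO_sub_taylor (n := 3)
  have hneg : _ =O[𝓝 0] fun ε : ℝ ↦ ε ^ 4 :=
    (htaylor.comp_tendsto (continuous_neg.tendsto' 0 0 neg_zero)).congr_right fun ε ↦ by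
      simp [Even.neg_pow (by decide : Even 4)]
  refine (htaylor.sub hneg).congr_left fun ε ↦ ?_
  simp only [Function.comp_apply, sum_range_succ, sum_range_zero, iteratedDeriv_zero,
    iteratedDeriv_one, ← sub_eq_add_neg, smul_eq_mul, Nat.factorial]
  push_cast
  ring

section ExpansionOfLogExpSubOne

variable {a b : ℝ} {u : ℝ → ℝ}

theorem exp_sub_one_sub_isBigO (ha : a ≠ 0)
    (hu : (fun ε ↦ u ε - (2 * a * ε + b / 3 * ε ^ 3)) =O[𝓝 0] fun ε ↦ ε ^ 4) :
    (fun ε ↦ Real.exp (u ε) - 1 - 2 * a * ε * Real.exp (a * ε + ε ^ 2 / 6 * (b / a + a ^ 2)))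
      =O[𝓝 0] fun ε ↦ ε ^ 4 := by
  set s := b / a + a ^ 2
  set p : ℝ → ℝ := fun ε ↦ 2 * a * ε + b / 3 * ε ^ 3
  set P : ℝ → ℝ := fun ε ↦ a * ε + ε ^ 2 / 6 * s
  have hp : p =O[𝓝 0] fun ε ↦ ε := by
    simpa using isBigO_pow_of_eq_pow_mul (n := 1) (q := fun ε ↦ 2 * a + b / 3 * ε ^ 2)
      (by fun_prop) (fun ε ↦ by simp only [p]; ring)
  have hP : P =O[𝓝 0] fun ε ↦ ε := by
    simpa using isBigO_pow_of_eq_pow_mul (n := 1) (q := fun ε ↦ a + ε / 6 * s)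
      (by fun_prop) (fun ε ↦ by simp only [P]; ring)
  have hu1 : u =O[𝓝 0] fun ε ↦ ε :=
    ((hu.trans (by simpa using (isLittleO_pow_pow (𝕜 := ℝ) (by norm_num : 1 < 4)).isBigO)).add
      hp).congr_left fun ε ↦ by ring
  have hexp_u : (fun ε ↦ Real.exp (u ε) - Real.exp (p ε)) =O[𝓝 0] fun ε ↦ ε ^ 4 :=
    ((Real.hasStrictDerivAt_exp 0).isBigO_comp_sub_comp (hu1.trans_tendsto tendsto_id)
      (hp.trans_tendsto tendsto_id)).trans hu
  have hexp_p : (fun ε ↦ Real.exp (p ε) - ∑ i ∈ range 4, p ε ^ i / i !) =O[𝓝 0]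
      fun ε ↦ ε ^ 4 :=
    ((Real.exp_sub_sum_range_isBigO_pow 4).comp_tendsto (hp.trans_tendsto tendsto_id)).trans
      (hp.pow 4)
  have hexp_P : (fun ε ↦ 2 * a * ε * (Real.exp (P ε) - ∑ i ∈ range 3, P ε ^ i / i !)) =O[𝓝 0]
      fun ε ↦ ε ^ 4 := by
    have h := ((Real.exp_sub_sum_range_isBigO_pow 3).comp_tendsto
      (hP.trans_tendsto tendsto_id)).trans (hP.pow 3)
    exact ((isBigO_refl (fun ε ↦ 2 * a * ε) _).mul h).trans
      (isBigO_pow_of_eq_pow_mul (q := fun _ ↦ 2 * a) continuousAt_const fun ε ↦ by ring)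
  have hs : a * s = b + a ^ 3 := by simp only [s]; field_simp
  have hpoly : (fun ε ↦ (∑ i ∈ range 4, p ε ^ i / i !) - 1
      - 2 * a * ε * ∑ i ∈ range 3, P ε ^ i / i !) =O[𝓝 0] fun ε ↦ ε ^ 4 := by
    refine isBigO_pow_of_eq_pow_mul (q := fun ε ↦ 2 * a * b / 3 - a ^ 2 * s / 3
      + (2 * a ^ 2 * b / 3 - a * s ^ 2 / 36) * ε + b ^ 2 / 18 * ε ^ 2 + a * b ^ 2 / 9 * ε ^ 3
      + b ^ 3 / 162 * ε ^ 5) (by fun_prop) fun ε ↦ ?_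
    simp only [p, P, sum_range_succ, sum_range_zero]
    push_cast [Nat.factorial]
    -- the `ε³` terms cancel exactly because `a * s = b + a ^ 3`
    linear_combination (-ε ^ 3 / 3) * hs
  refine (((hexp_u.add hexp_p).add hpoly).sub hexp_P).congr_left fun ε ↦ ?_
  ring

theorem exp_sub_one_div_sub_isBigO (ha : a ≠ 0)
    (hu : (fun ε ↦ u ε - (2 * a * ε + b / 3 * ε ^ 3)) =O[𝓝 0] fun ε ↦ ε ^ 4) :
    (fun ε ↦ (Real.exp (u ε) - 1) / (2 * a * ε) - Real.exp (a * ε + ε ^ 2 / 6 * (b / a + a ^ 2)))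
      =O[𝓝[≠] 0] fun ε ↦ ε ^ 3 := by
  have h := ((exp_sub_one_sub_isBigO ha hu).mono nhdsWithin_le_nhds).mul
    (isBigO_refl (fun ε ↦ (2 * a * ε)⁻¹) (𝓝[≠] 0))
  refine (h.congr' ?_ ?_).trans (isBigO_const_mul_self (2 * a)⁻¹ _ _) <;>
    filter_upwards [self_mem_nhdsWithin] with ε (hε : ε ≠ 0)
  all_goals field_simp

theorem log_exp_sub_one_sub_isBigO (ha : a ≠ 0)
    (hu : (fun ε ↦ u ε - (2 * a * ε + b / 3 * ε ^ 3)) =O[𝓝 0] fun ε ↦ ε ^ 4) :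
    (fun ε ↦ Real.log (Real.exp (u ε) - 1) - Real.log (2 * ε) - Real.log a - ε * a
      - ε ^ 2 / 6 * (b / a + a ^ 2)) =O[𝓝[≠] 0] fun ε ↦ ε ^ 3 := by
  set X := fun ε ↦ (Real.exp (u ε) - 1) / (2 * a * ε)
  set P := fun ε ↦ a * ε + ε ^ 2 / 6 * (b / a + a ^ 2)
  have hX := exp_sub_one_div_sub_isBigO ha hu
  have hP1 : Tendsto (fun ε ↦ Real.exp (P ε)) (𝓝[≠] 0) (𝓝 1) :=
    ((by fun_prop : Continuous fun ε ↦ Real.exp (P ε)).tendsto' 0 1 (by simp [P])).mono_left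
      nhdsWithin_le_nhds
  have hX1 : Tendsto X (𝓝[≠] 0) (𝓝 1) := by
    have hcube : Tendsto (fun ε : ℝ ↦ ε ^ 3) (𝓝[≠] 0) (𝓝 0) :=
      ((continuous_pow 3).tendsto' 0 0 (by simp)).mono_left nhdsWithin_le_nhds
    simpa using ((hX.trans_tendsto hcube).add hP1).congr fun ε ↦ sub_add_cancel (X ε) _
  have hlog := (Real.hasStrictDerivAt_log one_ne_zero).isBigO_comp_sub_comp hX1 hP1
  refine (hlog.trans hX).congr' ?_ EventuallyEq.rfl
  filter_upwards [self_mem_nhdsWithin, hX1.eventually_ne one_ne_zero] with ε (hε : ε ≠ 0) hXε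
  have hsplit : Real.exp (u ε) - 1 = X ε * (2 * ε) * a := by
    simp only [X]
    field_simp
  rw [Real.log_exp, hsplit, Real.log_mul (by positivity) ha, Real.log_mul hXε (by positivity)]
  ring

end ExpansionOfLogExpSubOne

/-- Continuum-limit expansion of a single term of the crown action: as `ε → 0⁺`,
`log(e^{f(t+ε)-f(t-ε)} - 1)
  = log(2ε) + log f'(t) + ε f'(t) + (ε²/6)(f'''(t)/f'(t) + f'(t)²) + O(ε³)`. -/
theorem stmt_16 (f : ℝ → ℝ) (t : ℝ) (hf : ContDiffAt ℝ 4 f t)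
    (hf' : 0 < deriv f t) :
    (fun ε : ℝ =>
        Real.log (Real.exp (f (t + ε) - f (t - ε)) - 1) -
          Real.log (2 * ε) - Real.log (deriv f t) - ε * deriv f t -
          ε ^ 2 / 6 * (iteratedDeriv 3 f t / deriv f t + (deriv f t) ^ 2))
      =O[nhdsWithin 0 (Set.Ioi 0)] fun ε : ℝ => ε ^ 3 :=
  (log_exp_sub_one_sub_isBigO (u := fun ε ↦ f (t + ε) - f (t - ε)) hf'.ne'
    hf.centralDifference_sub_isBigO).mono (nhdsWithin_mono _ fun _ hε ↦ ne_of_gt hε)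
end
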